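/- arXiv:math/0608107 — 7 statements merged into one kernel-verified Lean document; each statement's English description precedes it below -/
import Mathlib

section
/- Let X be an infinite Hausdorff ω-Lindelöf topological space. Then the following four properties are equivalent: (1) X satisfies α₂(Ω,Γ); (2) X satisfies α₃(Ω,Γ); (3) X satisfies α₄(Ω,Γ); (4) X satisfies S₁(Ω,Γ). -/
open Set Filter Pointwise

universe u

/-- The selection principle `S₁(𝒜,ℬ)`: for each sequence of elements of `𝒜` one can pick one
element from each term so that the set of chosen elements belongs to `ℬ`. -/
def S1 {Y : Type u} (cA cB : Set (Set Y)) : Prop :=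
  ∀ A : ℕ → Set Y, (∀ n, A n ∈ cA) →
    ∃ b : ℕ → Y, (∀ n, b n ∈ A n) ∧ Set.range b ∈ cB

/-- `α₁(𝒜,ℬ)`: for each sequence of infinite elements of `𝒜` there is `B ∈ ℬ` such that
`Aₙ \ B` is finite for each `n`. -/
def Alpha1 {Y : Type u} (cA cB : Set (Set Y)) : Prop :=
  ∀ A : ℕ → Set Y, (∀ n, A n ∈ cA ∧ (A n).Infinite) →
    ∃ B ∈ cB, ∀ n, (A n \ B).Finite

/-- `α₂(𝒜,ℬ)`: for each sequence of infinite elements of `𝒜` there is `B ∈ ℬ` such that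
`Aₙ ∩ B` is infinite for each `n`. -/
def Alpha2 {Y : Type u} (cA cB : Set (Set Y)) : Prop :=
  ∀ A : ℕ → Set Y, (∀ n, A n ∈ cA ∧ (A n).Infinite) →
    ∃ B ∈ cB, ∀ n, (A n ∩ B).Infinite

/-- `α₃(𝒜,ℬ)`: for each sequence of infinite elements of `𝒜` there is `B ∈ ℬ` such that
`Aₙ ∩ B` is infinite for infinitely many `n`. -/
def Alpha3 {Y : Type u} (cA cB : Set (Set Y)) : Prop :=
  ∀ A : ℕ → Set Y, (∀ n, A n ∈ cA ∧ (A n).Infinite) →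
    ∃ B ∈ cB, {n : ℕ | (A n ∩ B).Infinite}.Infinite

/-- `α₄(𝒜,ℬ)`: for each sequence of infinite elements of `𝒜` there is `B ∈ ℬ` such that
`Aₙ ∩ B` is nonempty for infinitely many `n`. -/
def Alpha4 {Y : Type u} (cA cB : Set (Set Y)) : Prop :=
  ∀ A : ℕ → Set Y, (∀ n, A n ∈ cA ∧ (A n).Infinite) →
    ∃ B ∈ cB, {n : ℕ | (A n ∩ B).Nonempty}.Infinite

/-- An ω-cover: a nontrivial open cover such that every finite set lies in some member. -/
def IsOmegaCover {Y : Type u} [TopologicalSpace Y] (cU : Set (Set Y)) : Prop :=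
  (∀ U ∈ cU, IsOpen U) ∧ ⋃₀ cU = Set.univ ∧ Set.univ ∉ cU ∧
    ∀ F : Set Y, F.Finite → ∃ U ∈ cU, F ⊆ U

/-- A k-cover: a nontrivial open cover such that every compact set lies in some member. -/
def IsKCover {Y : Type u} [TopologicalSpace Y] (cU : Set (Set Y)) : Prop :=
  (∀ U ∈ cU, IsOpen U) ∧ ⋃₀ cU = Set.univ ∧ Set.univ ∉ cU ∧
    ∀ K : Set Y, IsCompact K → ∃ U ∈ cU, K ⊆ U

/-- A γ-cover: an infinite open cover such that each finite set is contained in all but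
finitely many members. -/
def IsGammaCover {Y : Type u} [TopologicalSpace Y] (cU : Set (Set Y)) : Prop :=
  (∀ U ∈ cU, IsOpen U) ∧ ⋃₀ cU = Set.univ ∧ cU.Infinite ∧
    ∀ F : Set Y, F.Finite → {U ∈ cU | ¬ F ⊆ U}.Finite

/-- A γₖ-cover: an infinite open cover such that each compact set is contained in all but
finitely many members. -/
def IsGammaKCover {Y : Type u} [TopologicalSpace Y] (cU : Set (Set Y)) : Prop :=
  (∀ U ∈ cU, IsOpen U) ∧ ⋃₀ cU = Set.univ ∧ cU.Infinite ∧
    ∀ K : Set Y, IsCompact K → {U ∈ cU | ¬ K ⊆ U}.Finite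

/-- `Ω`: the collection of ω-covers of `Y`. -/
def OmegaCovers (Y : Type u) [TopologicalSpace Y] : Set (Set (Set Y)) :=
  {cU | IsOmegaCover cU}

/-- `𝒦`: the collection of k-covers of `Y`. -/
def KCovers (Y : Type u) [TopologicalSpace Y] : Set (Set (Set Y)) :=
  {cU | IsKCover cU}

/-- `Γ`: the collection of γ-covers of `Y`. -/
def GammaCovers (Y : Type u) [TopologicalSpace Y] : Set (Set (Set Y)) :=
  {cU | IsGammaCover cU}

/-- `Γₖ`: the collection of γₖ-covers of `Y`. -/
def GammaKCovers (Y : Type u) [TopologicalSpace Y] : Set (Set (Set Y)) :=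
  {cU | IsGammaKCover cU}

/-- `Y` is ω-Lindelöf if every ω-cover contains a countable ω-cover. -/
def OmegaLindelof (Y : Type u) [TopologicalSpace Y] : Prop :=
  ∀ cU : Set (Set Y), IsOmegaCover cU →
    ∃ cV ⊆ cU, cV.Countable ∧ IsOmegaCover cV

/-- `Y` is k-Lindelöf if every k-cover contains a countable k-cover. -/
def KLindelof (Y : Type u) [TopologicalSpace Y] : Prop :=
  ∀ cU : Set (Set Y), IsKCover cU →
    ∃ cV ⊆ cU, cV.Countable ∧ IsKCover cV

/-- `Ω_y`: subsets of `Y \ {y}` having `y` in their closure. -/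
def OmegaPt {Y : Type u} [TopologicalSpace Y] (y : Y) : Set (Set Y) :=
  {A | A ⊆ {y}ᶜ ∧ y ∈ closure A}

/-- `Σ_y`: (ranges of) nontrivial sequences in `Y` converging to `y`. -/
def SigmaPt {Y : Type u} [TopologicalSpace Y] (y : Y) : Set (Set Y) :=
  {S | ∃ f : ℕ → Y, (∀ n, f n ≠ y) ∧
    Filter.Tendsto f Filter.atTop (nhds y) ∧ S = Set.range f}

/-- `2^X`: the hyperspace of closed subsets of `X`. -/
abbrev HClosed (X : Type u) [TopologicalSpace X] : Type u := {F : Set X // IsClosed F}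

/-- The upper Fell topology on `2^X`, generated by the base
`{(Kᶜ)⁺ : K nonempty compact} ∪ {univ}`. -/
instance fellTopology (X : Type u) [TopologicalSpace X] : TopologicalSpace (HClosed X) :=
  TopologicalSpace.generateFrom
    ({S | ∃ K : Set X, IsCompact K ∧ K.Nonempty ∧ S = {F : HClosed X | F.1 ⊆ Kᶜ}} ∪
      {Set.univ})

/-- `𝕂(X)`: the hyperspace of nonempty compact subsets of `X`. -/
abbrev KSp (X : Type u) [TopologicalSpace X] : Type u := {K : Set X // IsCompact K ∧ K.Nonempty}

/-- The upper Vietoris topology on `𝕂(X)`, generated by the base of sets `U⁺`, `U` open. -/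
instance upperVietorisK (X : Type u) [TopologicalSpace X] : TopologicalSpace (KSp X) :=
  TopologicalSpace.generateFrom
    {S | ∃ U : Set X, IsOpen U ∧ S = {K : KSp X | K.1 ⊆ U}}

/-- `𝔽(X)`: the hyperspace of nonempty finite subsets of `X`. -/
abbrev FSp (X : Type u) [TopologicalSpace X] : Type u := {F : Set X // F.Finite ∧ F.Nonempty}

/-- The upper Vietoris topology on `𝔽(X)`, generated by the base of sets `U⁺`, `U` open. -/
instance upperVietorisF (X : Type u) [TopologicalSpace X] : TopologicalSpace (FSp X) :=
  TopologicalSpace.generateFrom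
    {S | ∃ U : Set X, IsOpen U ∧ S = {F : FSp X | F.1 ⊆ U}}

/-- For a topological group `G` with local base `Be` at the neutral element:
`Ω(e) = {ω(U) : U ∈ Be, no nonempty finite F with F·U = G}` where
`ω(U) = {F·U : F nonempty finite}`. -/
def OmegaE {G : Type u} [Group G] (Be : Set (Set G)) : Set (Set (Set G)) :=
  {cU | ∃ U ∈ Be,
    (¬ ∃ F : Set G, F.Finite ∧ F.Nonempty ∧ F * U = Set.univ) ∧
    cU = {V | ∃ F : Set G, F.Finite ∧ F.Nonempty ∧ V = F * U}}

/-- For a topological group `G` with local base `Be` at the neutral element: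
`𝒦(e) = {k(U) : U ∈ Be, no nonempty compact K with K·U = G}` where
`k(U) = {K·U : K nonempty compact}`. -/
def KcalE {G : Type u} [Group G] [TopologicalSpace G] (Be : Set (Set G)) :
    Set (Set (Set G)) :=
  {cU | ∃ U ∈ Be,
    (¬ ∃ K : Set G, IsCompact K ∧ K.Nonempty ∧ K * U = Set.univ) ∧
    cU = {V | ∃ K : Set G, IsCompact K ∧ K.Nonempty ∧ V = K * U}}

/-- Player ONE has a winning strategy in the game `G₁(𝒜,ℬ)`: a strategy assigns to each finite
sequence of TWO's previous moves a member of `𝒜`; it is winning if for every play in which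
TWO's moves follow it, the set of TWO's moves is not in `ℬ`. -/
def OneHasWinningStrategy {Y : Type u} (cA cB : Set (Set Y)) : Prop :=
  ∃ σ : List Y → Set Y, (∀ l : List Y, σ l ∈ cA) ∧
    ∀ b : ℕ → Y, (∀ n, b n ∈ σ (List.ofFn fun i : Fin n => b i)) → Set.range b ∉ cB


/-! Everything goes through the γ-property: every ω-cover has a γ-subcover.

* α₄ and ω-Lindelöfness give it: enumerate a countable ω-subcover as `V₀, V₁, …` and apply α₄
  to its tails; the γ-cover obtained meets the enumeration in infinitely many members.
* The γ-property gives S₁(Ω,Γ) (Gerlits–Nagy): for ω-covers `𝒰ₙ` and distinct points `yₖ`, the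
  sets `U₀ ∩ ⋯ ∩ Uₖ \ {yₖ}` with `Uᵢ ∈ 𝒰ᵢ` form an ω-cover. Along a γ-subcover the level `k`
  tends to infinity (a member of level `k` omits `yₖ`, while almost all members contain
  `y₀, …, yₘ`), so the `m`-th selection can be read off a member of level at least `m`.
* S₁(Ω,Γ) gives the γ-property trivially, and then α₂: a γ-subcover of each `𝒰ₙ` splits into
  infinitely many disjoint γ-covers, and one selection from all of them meets every `𝒰ₙ`
  infinitely often.
-/

theorem Set.Finite.exists_finite_forall_not_subset {α : Type*} {cG : Set (Set α)}
    (hG : cG.Finite) (huniv : univ ∉ cG) : ∃ F : Set α, F.Finite ∧ ∀ V ∈ cG, ¬ F ⊆ V := by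
  have : ∀ V : cG, ∃ x, x ∉ (V : Set α) := fun V =>
    (ne_univ_iff_exists_notMem _).1 fun h => huniv (h ▸ V.2)
  choose x hx using this
  have := hG.to_subtype
  exact ⟨range x, finite_range x, fun V hV hsub => hx ⟨V, hV⟩ (hsub (mem_range_self _))⟩

section Covers

variable {X : Type u} [TopologicalSpace X] {cU cV : Set (Set X)}

theorem IsOmegaCover.of_forall_finite (hopen : ∀ U ∈ cU, IsOpen U) (huniv : univ ∉ cU)
    (hfin : ∀ F : Set X, F.Finite → ∃ U ∈ cU, F ⊆ U) : IsOmegaCover cU := by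
  refine ⟨hopen, eq_univ_of_forall fun x => ?_, huniv, hfin⟩
  obtain ⟨U, hU, hxU⟩ := hfin {x} (finite_singleton x)
  exact ⟨U, hU, hxU rfl⟩

theorem IsOmegaCover.exists_mem_notMem_superset (h : IsOmegaCover cU) {F : Set X}
    (hF : F.Finite) {cG : Set (Set X)} (hG : cG.Finite) : ∃ U ∈ cU, U ∉ cG ∧ F ⊆ U := by
  obtain ⟨F', hF', hF'G⟩ :=
    (hG.inter_of_left cU).exists_finite_forall_not_subset fun h' => h.2.2.1 h'.2
  obtain ⟨U, hU, hsub⟩ := h.2.2.2 (F ∪ F') (hF.union hF')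
  exact ⟨U, hU, fun hUG => hF'G U ⟨hUG, hU⟩ (subset_union_right.trans hsub),
    subset_union_left.trans hsub⟩

theorem IsOmegaCover.infinite (h : IsOmegaCover cU) : cU.Infinite := fun hfin =>
  let ⟨_, hU, hUnot, _⟩ := h.exists_mem_notMem_superset finite_empty hfin
  hUnot hU

theorem IsOmegaCover.diff_finite (h : IsOmegaCover cU) (hV : cV.Finite) :
    IsOmegaCover (cU \ cV) :=
  .of_forall_finite (fun U hU => h.1 U hU.1) (fun hu => h.2.2.1 hu.1) fun _ hF =>
    let ⟨U, hU, hUV, hFU⟩ := h.exists_mem_notMem_superset hF hV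
    ⟨U, ⟨hU, hUV⟩, hFU⟩

theorem IsGammaCover.of_infinite (hopen : ∀ U ∈ cU, IsOpen U) (hinf : cU.Infinite)
    (hfin : ∀ F : Set X, F.Finite → {U ∈ cU | ¬ F ⊆ U}.Finite) : IsGammaCover cU := by
  refine ⟨hopen, eq_univ_of_forall fun x => ?_, hinf, hfin⟩
  obtain ⟨U, hU, hxU⟩ := (hinf.sdiff (hfin {x} (finite_singleton x))).nonempty
  exact ⟨U, hU, by_contra fun hx => hxU ⟨hU, fun h => hx (h rfl)⟩⟩

theorem IsGammaCover.mono (h : IsGammaCover cV) (hUV : cU ⊆ cV) (hinf : cU.Infinite) :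
    IsGammaCover cU :=
  .of_infinite (fun U hU => h.1 U (hUV hU)) hinf fun F hF =>
    (h.2.2.2 F hF).subset fun _ hU => ⟨hUV hU.1, hU.2⟩

theorem IsGammaCover.isOmegaCover (h : IsGammaCover cU) (huniv : univ ∉ cU) :
    IsOmegaCover cU :=
  .of_forall_finite h.1 huniv fun F hF =>
    let ⟨U, hU, hFU⟩ := (h.2.2.1.sdiff (h.2.2.2 F hF)).nonempty
    ⟨U, hU, by_contra fun hF' => hFU ⟨hU, hF'⟩⟩

theorem isGammaCover_range {b : ℕ → Set X} (hopen : ∀ n, IsOpen (b n)) (hne : ∀ n, b n ≠ univ)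
    (hb : ∀ F : Set X, F.Finite → ∀ᶠ n in atTop, F ⊆ b n) : IsGammaCover (range b) := by
  refine .of_infinite (forall_mem_range.2 hopen) (fun hfin => ?_) fun F hF => ?_
  · obtain ⟨F, hF, hFb⟩ := hfin.exists_finite_forall_not_subset fun ⟨n, hn⟩ => hne n hn
    obtain ⟨n, hn⟩ := (hb F hF).exists
    exact hFb _ (mem_range_self n) hn
  · have hbad : {n | ¬ F ⊆ b n}.Finite := by
      rw [← eventually_cofinite, Nat.cofinite_eq_atTop]
      exact hb F hF
    refine (hbad.image b).subset ?_
    rintro _ ⟨⟨n, rfl⟩, hn⟩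
    exact mem_image_of_mem b hn

theorem IsGammaCover.exists_seq (h : IsGammaCover cU) : ∃ g : ℕ → Set X, Function.Injective g ∧
    (∀ n, g n ∈ cU) ∧ ∀ F : Set X, F.Finite → ∀ᶠ n in atTop, F ⊆ g n := by
  let e := h.2.2.1.natEmbedding
  refine ⟨fun n => e n, fun m n hmn => e.injective (Subtype.ext hmn), fun n => (e n).2,
    fun F hF => ?_⟩
  rw [← Nat.cofinite_eq_atTop, eventually_cofinite]
  exact ((h.2.2.2 F hF).preimage (fun m _ n _ hmn => e.injective (Subtype.ext hmn))).subset
    fun n hn => ⟨(e n).2, hn⟩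

end Covers

theorem Alpha2.alpha3 {Y : Type u} {cA cB : Set (Set Y)} (h : Alpha2 cA cB) : Alpha3 cA cB :=
  fun A hA =>
    let ⟨B, hB, hinf⟩ := h A hA
    ⟨B, hB, infinite_univ.mono fun n _ => hinf n⟩

theorem Alpha3.alpha4 {Y : Type u} {cA cB : Set (Set Y)} (h : Alpha3 cA cB) : Alpha4 cA cB :=
  fun A hA =>
    let ⟨B, hB, hinf⟩ := h A hA
    ⟨B, hB, hinf.mono fun _ hn => hn.nonempty⟩

def HasGammaProperty (X : Type u) [TopologicalSpace X] : Prop :=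
  ∀ cU : Set (Set X), IsOmegaCover cU → ∃ cG ⊆ cU, IsGammaCover cG

section GammaProperty

variable {X : Type u} [TopologicalSpace X]

theorem S1.hasGammaProperty (hs : S1 (OmegaCovers X) (GammaCovers X)) : HasGammaProperty X :=
  fun cU hU =>
    let ⟨b, hb, hγ⟩ := hs (fun _ => cU) fun _ => hU
    ⟨range b, range_subset_iff.2 hb, hγ⟩

theorem hasGammaProperty_of_alpha4 (hL : OmegaLindelof X)
    (ha : Alpha4 (OmegaCovers X) (GammaCovers X)) : HasGammaProperty X := by
  intro cU hU
  obtain ⟨cV, hVU, hVc, hV⟩ := hL cU hU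
  obtain ⟨V, rfl⟩ := hVc.exists_eq_range hV.infinite.nonempty
  let A : ℕ → Set (Set X) := fun n => range V \ V '' Iio n
  have hA : ∀ n, IsOmegaCover (A n) := fun n => hV.diff_finite ((finite_Iio n).image V)
  obtain ⟨B, hB, hAB⟩ := ha A fun n => ⟨hA n, (hA n).infinite⟩
  refine ⟨range V ∩ B, inter_subset_left.trans hVU, hB.mono inter_subset_right fun hfin => ?_⟩
  choose idx hidx using fun W : ↥(range V ∩ B) => W.2.1
  have := hfin.to_subtype
  obtain ⟨N, hN⟩ := (finite_range idx).bddAbove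
  refine hAB ((finite_Iic N).subset fun n ⟨W, ⟨hWV, hWn⟩, hWB⟩ => ?_)
  have hidxN : idx ⟨W, hWV, hWB⟩ ≤ N := hN (mem_range_self _)
  have hnidx : n ≤ idx ⟨W, hWV, hWB⟩ :=
    not_lt.1 fun hlt => hWn ⟨_, hlt, hidx ⟨W, hWV, hWB⟩⟩
  exact hnidx.trans hidxN

def diagCover (A : ℕ → Set (Set X)) (y : ℕ → X) : Set (Set X) :=
  {W | ∃ k, ∃ f : ℕ → Set X, (∀ i ≤ k, f i ∈ A i) ∧ W = (⋂ i ∈ Iic k, f i) \ {y k}}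

theorem isOmegaCover_diagCover [T1Space X] {A : ℕ → Set (Set X)}
    (hA : ∀ n, IsOmegaCover (A n)) {y : ℕ → X} (hy : Function.Injective y) :
    IsOmegaCover (diagCover A y) := by
  refine .of_forall_finite ?_ ?_ fun F hF => ?_
  · rintro _ ⟨k, f, hf, rfl⟩
    exact ((finite_Iic k).isOpen_biInter fun i hi => (hA i).1 _ (hf i hi)).sdiff
      isClosed_singleton
  · rintro ⟨k, f, -, he⟩
    have hyk : y k ∈ (⋂ i ∈ Iic k, f i) \ {y k} := he ▸ mem_univ _
    exact hyk.2 rfl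
  · obtain ⟨k, hk⟩ := (hF.preimage hy.injOn).infinite_compl.nonempty
    choose f hfA hFf using fun i => (hA i).2.2.2 F hF
    exact ⟨_, ⟨k, f, fun i _ => hfA i, rfl⟩,
      subset_sdiff_singleton (subset_iInter₂ fun i _ => hFf i) hk⟩

theorem s1_of_hasGammaProperty [T1Space X] [Infinite X] (hγ : HasGammaProperty X) :
    S1 (OmegaCovers X) (GammaCovers X) := by
  intro A hA
  let y := Infinite.natEmbedding X
  obtain ⟨G, hGW, hG⟩ := hγ _ (isOmegaCover_diagCover hA y.injective)
  obtain ⟨g, -, hgG, hg⟩ := hG.exists_seq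
  choose k f hfA hgf using fun j => hGW (hgG j)
  have hk : Tendsto k atTop atTop := tendsto_atTop.2 fun m =>
    (hg _ ((finite_Iio m).image y)).mono fun j hj => by
      by_contra! hlt
      have hyk := hj (mem_image_of_mem y hlt)
      rw [hgf j] at hyk
      exact hyk.2 rfl
  choose φ hkφ hφ using fun m => ((tendsto_atTop.1 hk m).and (eventually_ge_atTop m)).exists
  have hgφ : ∀ m, g (φ m) ⊆ f (φ m) m := fun m => by
    rw [hgf]
    exact sdiff_subset.trans (biInter_subset_of_mem (hkφ m))
  have hfφ : ∀ m, f (φ m) m ∈ A m := fun m => hfA _ _ (hkφ m)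
  refine ⟨fun m => f (φ m) m, hfφ, isGammaCover_range (fun m => (hA m).1 _ (hfφ m))
    (fun m h => (hA m).2.2.1 (h ▸ hfφ m)) fun F hF => ?_⟩
  exact ((tendsto_atTop_mono hφ tendsto_id).eventually (hg F hF)).mono fun m hm =>
    hm.trans (hgφ m)

theorem alpha2_of_s1 (hs : S1 (OmegaCovers X) (GammaCovers X)) :
    Alpha2 (OmegaCovers X) (GammaCovers X) := by
  intro A hA
  choose cG hGA hG using fun n => hs.hasGammaProperty (A n) (hA n).1
  choose g hg hgG _ using fun n => (hG n).exists_seq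
  let P : ℕ → ℕ → Set (Set X) := fun n j => range fun i => g n (Nat.pair j i)
  have hPG : ∀ n j, P n j ⊆ cG n := fun n j => range_subset_iff.2 fun _ => hgG n _
  have hP : ∀ n j, P n j ∈ OmegaCovers X := fun n j =>
    ((hG n).mono (hPG n j) (infinite_range_of_injective
      ((hg n).comp fun _ _ h => (Nat.pair_eq_pair.1 h).2))).isOmegaCover
      fun h => (hA n).1.2.2.1 (hGA n (hPG n j h))
  obtain ⟨b, hbP, hb⟩ := hs (fun r => P r.unpair.1 r.unpair.2) fun r => hP _ _
  refine ⟨range b, hb, fun n => ?_⟩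
  have hbn : ∀ j, b (Nat.pair n j) ∈ P n j := fun j => by
    simpa only [Nat.unpair_pair] using hbP (Nat.pair n j)
  refine infinite_of_injective_forall_mem (f := fun j => b (Nat.pair n j)) (fun j j' h => ?_)
    fun j => ⟨hGA n (hPG n j (hbn j)), mem_range_self _⟩
  obtain ⟨i, hi⟩ := hbn j
  obtain ⟨i', hi'⟩ := hbn j'
  exact (Nat.pair_eq_pair.1 (hg n (hi.trans (h.trans hi'.symm)))).1

end GammaProperty

/-- Theorem (α₂/α₃/α₄/S₁ for (Ω,Γ) in ω-Lindelöf spaces). -/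
theorem stmt0 (X : Type u) [TopologicalSpace X] [T2Space X] [Infinite X]
    (hL : OmegaLindelof X) :
    [Alpha2 (OmegaCovers X) (GammaCovers X),
     Alpha3 (OmegaCovers X) (GammaCovers X),
     Alpha4 (OmegaCovers X) (GammaCovers X),
     S1 (OmegaCovers X) (GammaCovers X)].TFAE := by
  tfae_have 1 → 2 := Alpha2.alpha3
  tfae_have 2 → 3 := Alpha3.alpha4
  tfae_have 3 → 4 := fun h => s1_of_hasGammaProperty (hasGammaProperty_of_alpha4 hL h)
  tfae_have 4 → 1 := alpha2_of_s1
  tfae_finish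
end

section
/- Let X be an infinite Hausdorff k-Lindelöf non-compact topological space. Then the properties α₂(𝒦,Γ), α₃(𝒦,Γ), α₄(𝒦,Γ) and S₁(𝒦,Γ) are all equivalent. -/
open Set Filter Pointwise

universe u

section Aux

variable {X : Type u} [TopologicalSpace X]

lemma kcover_infinite {𝒰 : Set (Set X)} (h : IsKCover 𝒰) : 𝒰.Infinite := by
  obtain ⟨hop, hcov, hnu, hk⟩ := h
  by_contra hfin
  rw [Set.not_infinite] at hfin
  classical
  have hx : ∀ U ∈ 𝒰, ∃ x, x ∉ U := by
    intro U hU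
    refine (Set.ne_univ_iff_exists_notMem U).mp ?_
    rintro rfl; exact hnu hU
  have hney : Nonempty X := by
    obtain ⟨U, hU, _⟩ := hk ∅ isCompact_empty
    obtain ⟨x, _⟩ := hx U hU
    exact ⟨x⟩
  choose! p hp using hx
  obtain ⟨U, hU, hKU⟩ := hk (p '' 𝒰) (hfin.image p).isCompact
  exact hp U hU (hKU (Set.mem_image_of_mem p hU))

lemma kcover_diff {𝒰 S : Set (Set X)} (h : IsKCover 𝒰) (hS : S.Finite) :
    IsKCover (𝒰 \ S) := by
  obtain ⟨hop, hcov, hnu, hk⟩ := h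
  classical
  have key : ∀ K : Set X, IsCompact K → ∃ U ∈ 𝒰 \ S, K ⊆ U := by
    intro K hKc
    have hx : ∀ U ∈ S ∩ 𝒰, ∃ x, x ∉ U := by
      intro U hU
      refine (Set.ne_univ_iff_exists_notMem U).mp ?_
      rintro rfl; exact hnu hU.2
    have hney : Nonempty X := by
      obtain ⟨U, hU, _⟩ := hk ∅ isCompact_empty
      obtain ⟨x, _⟩ := (Set.ne_univ_iff_exists_notMem U).mp (by rintro rfl; exact hnu hU)
      exact ⟨x⟩
    choose! p hp using hx
    have hfin' : (S ∩ 𝒰).Finite := hS.inter_of_left _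
    obtain ⟨U, hU, hsub⟩ := hk (K ∪ p '' (S ∩ 𝒰)) (hKc.union (hfin'.image p).isCompact)
    refine ⟨U, ⟨hU, fun hUS => ?_⟩, fun x hx' => hsub (Or.inl hx')⟩
    exact hp U ⟨hUS, hU⟩ (hsub (Or.inr (Set.mem_image_of_mem p ⟨hUS, hU⟩)))
  refine ⟨fun U hU => hop U hU.1, ?_, fun h' => hnu h'.1, key⟩
  apply Set.eq_univ_of_forall
  intro x
  obtain ⟨U, hU, hsub⟩ := key {x} isCompact_singleton
  exact ⟨U, hU, hsub (Set.mem_singleton x)⟩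

lemma gamma_subset {B C : Set (Set X)} (hB : IsGammaCover B) (hCB : C ⊆ B)
    (hC : C.Infinite) : IsGammaCover C := by
  obtain ⟨hop, hcov, hinf, hfin⟩ := hB
  refine ⟨fun U hU => hop U (hCB hU), ?_, hC,
    fun F hF => (hfin F hF).subset (fun U hU => ⟨hCB hU.1, hU.2⟩)⟩
  apply Set.eq_univ_of_forall; intro x
  have h1 : {U ∈ B | ¬ {x} ⊆ U}.Finite := hfin {x} (Set.finite_singleton x)
  obtain ⟨U, hU⟩ := (hC.diff h1).nonempty
  have hxU : {x} ⊆ U := by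
    by_contra hnot
    exact hU.2 ⟨hCB hU.1, hnot⟩
  exact ⟨U, hU.1, hxU (Set.mem_singleton x)⟩

lemma infinite_nat_exists_ge {T : Set ℕ} (hT : T.Infinite) (n : ℕ) :
    ∃ m ∈ T, n ≤ m := by
  by_contra h
  push_neg at h
  exact hT ((Set.finite_Iio n).subset (fun m hm => h m hm))

lemma exists_infinite_fiber_of_finite_image {α : Type*} (f : ℕ → α) (T : Set ℕ)
    (hT : T.Infinite) (h : (f '' T).Finite) : ∃ v, {j | j ∈ T ∧ f j = v}.Infinite := by
  by_contra h'
  push_neg at h'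
  have hsub : T ⊆ ⋃ v ∈ f '' T, {j | j ∈ T ∧ f j = v} := fun j hj =>
    Set.mem_biUnion (Set.mem_image_of_mem f hj) ⟨hj, rfl⟩
  exact hT ((h.biUnion (fun v _ => h' v)).subset hsub)

lemma gamma_of_seq [Nonempty X] {b : ℕ → Set X} (hop : ∀ n, IsOpen (b n))
    (hne : ∀ n, b n ≠ Set.univ)
    (hcof : ∀ F : Set X, F.Finite → {n | ¬ F ⊆ b n}.Finite) :
    IsGammaCover (Set.range b) := by
  classical
  have hinf : (Set.range b).Infinite := by
    by_contra hfin
    rw [Set.not_infinite] at hfin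
    have hx : ∀ U ∈ Set.range b, ∃ x, x ∉ U := by
      rintro U ⟨n, rfl⟩
      exact (Set.ne_univ_iff_exists_notMem _).mp (hne n)
    choose! p hp using hx
    have h1 := hcof _ (hfin.image p)
    have h2 : {n | ¬ (p '' Set.range b) ⊆ b n} = Set.univ := by
      apply Set.eq_univ_of_forall
      intro n hsub
      exact hp (b n) ⟨n, rfl⟩ (hsub (Set.mem_image_of_mem p ⟨n, rfl⟩))
    rw [h2] at h1
    exact Set.infinite_univ h1
  refine ⟨by rintro U ⟨n, rfl⟩; exact hop n, ?_, hinf, ?_⟩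
  · apply Set.eq_univ_of_forall; intro x
    have h1 := hcof {x} (Set.finite_singleton x)
    obtain ⟨n, hn⟩ := h1.infinite_compl.nonempty
    simp only [Set.mem_compl_iff, Set.mem_setOf_eq, not_not] at hn
    exact ⟨b n, ⟨n, rfl⟩, hn (Set.mem_singleton x)⟩
  · intro F hF
    refine ((hcof F hF).image b).subset ?_
    rintro U ⟨⟨n, rfl⟩, hU⟩
    exact ⟨n, hU, rfl⟩

lemma gamma_of_seq_of_gamma [Nonempty X] {B : Set (Set X)} (hB : IsGammaCover B)
    {W b : ℕ → Set X} (hWB : ∀ i, W i ∈ B) (hfib : ∀ V, {i | W i = V}.Finite)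
    (hsub : ∀ i, W i ⊆ b i) (hop : ∀ i, IsOpen (b i)) (hne : ∀ i, b i ≠ Set.univ) :
    IsGammaCover (Set.range b) := by
  apply gamma_of_seq hop hne
  intro F hF
  have hbad : {V ∈ B | ¬ F ⊆ V}.Finite := hB.2.2.2 F hF
  have hsub2 : {n | ¬ F ⊆ b n} ⊆ ⋃ V ∈ {V ∈ B | ¬ F ⊆ V}, {i | W i = V} := by
    intro n hn
    have h1 : ¬ F ⊆ W n := fun h => hn (h.trans (hsub n))
    exact Set.mem_biUnion ⟨hWB n, h1⟩ rfl
  exact ((hbad.biUnion (fun V _ => hfib V)).subset hsub2)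

lemma gamma_subcover_of_alpha4 (h4 : Alpha4 (KCovers X) (GammaCovers X))
    {𝒰 : Set (Set X)} (hU : IsKCover 𝒰) (hc : 𝒰.Countable) :
    ∃ B ⊆ 𝒰, IsGammaCover B := by
  classical
  have hinf := kcover_infinite hU
  obtain ⟨e, he⟩ := hc.exists_eq_range hinf.nonempty
  have hAk : ∀ j : ℕ, IsKCover (𝒰 \ (e '' Set.Iic j)) := fun j =>
    kcover_diff hU ((Set.finite_Iic j).image e)
  obtain ⟨B, hBΓ, hT⟩ := h4 (fun j => 𝒰 \ (e '' Set.Iic j))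
    (fun j => ⟨hAk j, kcover_infinite (hAk j)⟩)
  have hVex : ∀ j ∈ {j : ℕ | ((𝒰 \ (e '' Set.Iic j)) ∩ B).Nonempty},
      ∃ V, V ∈ (𝒰 \ (e '' Set.Iic j)) ∩ B := fun j hj => hj
  choose! V hV using hVex
  set T := {j : ℕ | ((𝒰 \ (e '' Set.Iic j)) ∩ B).Nonempty} with hTdef
  have himg : (V '' T).Infinite := by
    by_contra hfin
    rw [Set.not_infinite] at hfin
    obtain ⟨v, hvinf⟩ := exists_infinite_fiber_of_finite_image V T hT hfin
    have hv𝒰 : v ∈ 𝒰 := by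
      obtain ⟨j, hj⟩ := hvinf.nonempty
      exact hj.2 ▸ (hV j hj.1).1.1
    rw [he] at hv𝒰
    obtain ⟨t, ht⟩ := hv𝒰
    obtain ⟨j, hj, hjt⟩ := infinite_nat_exists_ge hvinf t
    exact (hV j hj.1).1.2 ⟨t, hjt, ht.trans hj.2.symm⟩
  have hBU : (𝒰 ∩ B).Infinite := by
    refine himg.mono ?_
    rintro v ⟨j, hj, rfl⟩
    exact ⟨(hV j hj).1.1, (hV j hj).2⟩
  exact ⟨𝒰 ∩ B, Set.inter_subset_left, gamma_subset hBΓ Set.inter_subset_right hBU⟩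

def PrefInt (𝒰 : ℕ → Set (Set X)) (m : ℕ) : Set (Set X) :=
  {W | ∃ U : ℕ → Set X, (∀ i ≤ m, U i ∈ 𝒰 i) ∧ W = ⋂ i ∈ Set.Iic m, U i}

lemma prefInt_isOpen {𝒰 : ℕ → Set (Set X)} (h𝒰 : ∀ n, IsKCover (𝒰 n)) {m : ℕ}
    {W : Set X} (hW : W ∈ PrefInt 𝒰 m) : IsOpen W := by
  obtain ⟨U, hU, rfl⟩ := hW
  exact (Set.finite_Iic m).isOpen_biInter (fun i hi => (h𝒰 i).1 _ (hU i hi))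

lemma prefInt_ne_univ {𝒰 : ℕ → Set (Set X)} (h𝒰 : ∀ n, IsKCover (𝒰 n)) {m : ℕ}
    {W : Set X} (hW : W ∈ PrefInt 𝒰 m) : W ≠ Set.univ := by
  obtain ⟨U, hU, rfl⟩ := hW
  intro h
  have h0 : (⋂ i ∈ Set.Iic m, U i) ⊆ U 0 :=
    Set.biInter_subset_of_mem (Set.mem_Iic.mpr (Nat.zero_le m))
  rw [h] at h0
  have hU0 : U 0 = Set.univ := Set.eq_univ_of_univ_subset h0
  exact (h𝒰 0).2.2.1 (hU0 ▸ hU 0 (Nat.zero_le m))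

lemma prefInt_sub {𝒰 : ℕ → Set (Set X)} {m : ℕ} {W : Set X}
    (hW : W ∈ PrefInt 𝒰 m) {i : ℕ} (hi : i ≤ m) : ∃ U ∈ 𝒰 i, W ⊆ U := by
  obtain ⟨U, hU, rfl⟩ := hW
  exact ⟨U i, hU i hi, Set.biInter_subset_of_mem (Set.mem_Iic.mpr hi)⟩

lemma prefInt_exists {𝒰 : ℕ → Set (Set X)} (h𝒰 : ∀ n, IsKCover (𝒰 n))
    {K : Set X} (hK : IsCompact K) (m : ℕ) : ∃ W ∈ PrefInt 𝒰 m, K ⊆ W := by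
  classical
  have h : ∀ i, ∃ U ∈ 𝒰 i, K ⊆ U := fun i => (h𝒰 i).2.2.2 K hK
  choose U hU hKU using h
  exact ⟨⋂ i ∈ Set.Iic m, U i, ⟨U, fun i _ => hU i, rfl⟩,
    Set.subset_iInter₂ (fun i _ => hKU i)⟩

lemma alpha4_to_S1 [Nonempty X] (hL : KLindelof X)
    (h4 : Alpha4 (KCovers X) (GammaCovers X)) : S1 (KCovers X) (GammaCovers X) := by
  classical
  intro A hA
  choose 𝒰 h𝒰A h𝒰c h𝒰k using fun n => hL (A n) (hA n)
  set Dinf : Set (Set X) := {W | ∀ n, ∃ m, n ≤ m ∧ W ∈ PrefInt 𝒰 m} with hDinf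
  by_cases hI : ∀ K : Set X, IsCompact K → ∃ W ∈ Dinf, K ⊆ W
  · -- Case I
    have hDk : IsKCover Dinf := by
      refine ⟨?_, ?_, ?_, hI⟩
      · intro W hW
        obtain ⟨m, _, hWm⟩ := hW 0
        exact prefInt_isOpen h𝒰k hWm
      · apply Set.eq_univ_of_forall; intro x
        obtain ⟨W, hW, hxW⟩ := hI {x} isCompact_singleton
        exact ⟨W, hW, hxW (Set.mem_singleton x)⟩
      · intro h
        obtain ⟨m, _, hWm⟩ := h 0
        exact prefInt_ne_univ h𝒰k hWm rfl
    obtain ⟨D', hD'sub, hD'c, hD'k⟩ := hL Dinf hDk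
    obtain ⟨B, hBsub, hBΓ⟩ := gamma_subcover_of_alpha4 h4 hD'k hD'c
    have hBinf : B.Infinite := hBΓ.2.2.1
    set g := hBinf.natEmbedding with hg
    have hWB : ∀ i, (g i : Set X) ∈ B := fun i => (g i).2
    have hWD : ∀ i, (g i : Set X) ∈ Dinf := fun i => hD'sub (hBsub (hWB i))
    have hbx : ∀ i, ∃ U ∈ 𝒰 i, (g i : Set X) ⊆ U := by
      intro i
      obtain ⟨m, him, hWm⟩ := hWD i i
      exact prefInt_sub hWm him
    choose b hb hWb using hbx
    refine ⟨b, fun n => h𝒰A n (hb n), ?_⟩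
    have hWinj : Function.Injective (fun i => (g i : Set X)) := fun i j hij =>
      g.injective (Subtype.ext hij)
    exact gamma_of_seq_of_gamma hBΓ hWB
      (fun V => Set.Subsingleton.finite (fun i hi j hj => hWinj (hi.trans hj.symm)))
      hWb (fun i => (h𝒰k i).1 _ (hb i)) (fun i h => (h𝒰k i).2.2.1 (h ▸ hb i))
  · -- Case II
    push_neg at hI
    obtain ⟨K₀, hK₀c, hK₀⟩ := hI
    set Aseq : ℕ → Set (Set X) :=
      fun n => {W | K₀ ⊆ W ∧ ∃ m, n ≤ m ∧ W ∈ PrefInt 𝒰 m} with hAseq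
    have hAk : ∀ n, IsKCover (Aseq n) := by
      intro n
      have hkey : ∀ K : Set X, IsCompact K → ∃ W ∈ Aseq n, K ⊆ W := by
        intro K hK
        obtain ⟨W, hWm, hKW⟩ := prefInt_exists h𝒰k (hK.union hK₀c) n
        exact ⟨W, ⟨(Set.union_subset_iff.mp hKW).2, n, le_refl n, hWm⟩,
          (Set.union_subset_iff.mp hKW).1⟩
      refine ⟨?_, ?_, ?_, hkey⟩
      · rintro W ⟨_, m, _, hWm⟩; exact prefInt_isOpen h𝒰k hWm
      · apply Set.eq_univ_of_forall; intro x
        obtain ⟨W, hW, hxW⟩ := hkey {x} isCompact_singleton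
        exact ⟨W, hW, hxW (Set.mem_singleton x)⟩
      · rintro ⟨_, m, _, hWm⟩; exact prefInt_ne_univ h𝒰k hWm rfl
    obtain ⟨B, hBΓ, hT⟩ := h4 Aseq (fun n => ⟨hAk n, kcover_infinite (hAk n)⟩)
    have hnx : ∀ i : ℕ, ∃ n ∈ {n | (Aseq n ∩ B).Nonempty}, i ≤ n := fun i =>
      infinite_nat_exists_ge hT i
    choose nn hnT hni using hnx
    have hWx : ∀ i, ∃ V, V ∈ Aseq (nn i) ∩ B := fun i => hnT i
    choose W hW using hWx
    have hbx : ∀ i, ∃ U ∈ 𝒰 i, W i ⊆ U := by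
      intro i
      obtain ⟨m, hm, hWm⟩ := (hW i).1.2
      exact prefInt_sub hWm ((hni i).trans hm)
    choose b hb hWb using hbx
    refine ⟨b, fun n => h𝒰A n (hb n), ?_⟩
    have hfib : ∀ V, {i | W i = V}.Finite := by
      intro V
      by_contra hf
      have hf : {i | W i = V}.Infinite := hf
      have hVD : V ∈ Dinf := by
        intro n
        obtain ⟨i, hiV, hin⟩ := infinite_nat_exists_ge hf n
        obtain ⟨m, hm, hWm⟩ := (hW i).1.2
        exact ⟨m, le_trans (le_trans hin (hni i)) hm, hiV ▸ hWm⟩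
      obtain ⟨i, hiV⟩ := hf.nonempty
      exact hK₀ V hVD (hiV ▸ (hW i).1.1)
    exact gamma_of_seq_of_gamma hBΓ (fun i => (hW i).2) hfib hWb
      (fun i => (h𝒰k i).1 _ (hb i)) (fun i h => (h𝒰k i).2.2.1 (h ▸ hb i))

lemma S1_to_alpha2 (hL : KLindelof X) (h1 : S1 (KCovers X) (GammaCovers X)) :
    Alpha2 (KCovers X) (GammaCovers X) := by
  classical
  intro A hA
  choose 𝒰 h𝒰A h𝒰c h𝒰k using fun n => hL (A n) ((hA n).1)
  have hen : ∀ n, ∃ e : ℕ → Set X, 𝒰 n = Set.range e := fun n =>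
    (h𝒰c n).exists_eq_range (kcover_infinite (h𝒰k n)).nonempty
  choose e he using hen
  have hDk : ∀ n j, IsKCover (𝒰 n \ (e n '' Set.Iic j)) := fun n j =>
    kcover_diff (h𝒰k n) ((Set.finite_Iic j).image (e n))
  obtain ⟨b, hbC, hbΓ⟩ := h1
    (fun q => 𝒰 (Nat.unpair q).1 \ (e (Nat.unpair q).1 '' Set.Iic (Nat.unpair q).2))
    (fun q => hDk _ _)
  refine ⟨Set.range b, hbΓ, ?_⟩
  intro n
  have hfD : ∀ j, b (Nat.pair n j) ∈ 𝒰 n \ (e n '' Set.Iic j) := by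
    intro j
    have h := hbC (Nat.pair n j)
    simpa [Nat.unpair_pair] using h
  have hsub : Set.range (fun j => b (Nat.pair n j)) ⊆ A n ∩ Set.range b := by
    rintro v ⟨j, rfl⟩
    exact ⟨h𝒰A n (hfD j).1, ⟨Nat.pair n j, rfl⟩⟩
  refine Set.Infinite.mono hsub ?_
  by_contra hfin
  rw [Set.not_infinite] at hfin
  have hfin' : ((fun j => b (Nat.pair n j)) '' Set.univ).Finite := by
    rwa [Set.image_univ]
  obtain ⟨v, hvinf⟩ := exists_infinite_fiber_of_finite_image _ Set.univ
    Set.infinite_univ hfin'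
  have hv : v ∈ 𝒰 n := by
    obtain ⟨j, hj⟩ := hvinf.nonempty
    exact hj.2 ▸ (hfD j).1
  rw [he n] at hv
  obtain ⟨t, ht⟩ := hv
  obtain ⟨j, hj, htj⟩ := infinite_nat_exists_ge hvinf t
  exact (hfD j).2 ⟨t, htj, ht.trans hj.2.symm⟩

end Aux

/-- Theorem (α₂/α₃/α₄/S₁ for (𝒦,Γ) in k-Lindelöf non-compact spaces). -/
theorem stmt1 (X : Type u) [TopologicalSpace X] [T2Space X] [Infinite X]
    (hL : KLindelof X) (hnc : ¬ CompactSpace X) :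
    [Alpha2 (KCovers X) (GammaCovers X),
     Alpha3 (KCovers X) (GammaCovers X),
     Alpha4 (KCovers X) (GammaCovers X),
     S1 (KCovers X) (GammaCovers X)].TFAE := by
  have hne : Nonempty X := inferInstance
  tfae_have 1 → 2 := by
    intro h2 A hA
    obtain ⟨B, hB, h⟩ := h2 A hA
    refine ⟨B, hB, ?_⟩
    have heq : {n : ℕ | (A n ∩ B).Infinite} = Set.univ :=
      Set.eq_univ_of_forall h
    rw [heq]; exact Set.infinite_univ
  tfae_have 2 → 3 := by
    intro h3 A hA
    obtain ⟨B, hB, h⟩ := h3 A hA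
    exact ⟨B, hB, h.mono (fun n hn => hn.nonempty)⟩
  tfae_have 3 → 4 := fun h4 => alpha4_to_S1 hL h4
  tfae_have 4 → 1 := fun h1 => S1_to_alpha2 hL h1
  tfae_finish
end

section
/- Let X be an infinite Hausdorff k-Lindelöf non-compact topological space. Then the properties α₂(𝒦,Γₖ), α₃(𝒦,Γₖ), α₄(𝒦,Γₖ) and S₁(𝒦,Γₖ) are all equivalent. -/
open Set Filter Pointwise

universe u

section AuxKGamma

open Function Set

variable {X : Type u} [TopologicalSpace X] [Infinite X]

lemma IsKCover.ne_univ' {cU : Set (Set X)} (h : IsKCover cU) {U : Set X} (hU : U ∈ cU) :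
    U ≠ Set.univ := fun e => h.2.2.1 (e ▸ hU)

lemma IsKCover.infinite' {cU : Set (Set X)} (h : IsKCover cU) : cU.Infinite := by
  classical
  intro hfin
  let g : Set X → X := fun U => if hU : ∃ x, x ∉ U then hU.choose else Classical.arbitrary X
  have hg : ∀ U : Set X, U ≠ Set.univ → g U ∉ U := by
    intro U hU
    have hU' : ∃ x, x ∉ U := by
      rcases (Set.ne_univ_iff_exists_notMem U).mp hU with ⟨x, hx⟩; exact ⟨x, hx⟩
    simp only [g, dif_pos hU']
    exact hU'.choose_spec
  obtain ⟨U, hU, hsub⟩ := h.2.2.2 (g '' cU) (hfin.image g).isCompact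
  exact hg U (h.ne_univ' hU) (hsub ⟨U, hU, rfl⟩)

lemma IsKCover.diff_finite' {cU F : Set (Set X)} (h : IsKCover cU) (hF : F.Finite) :
    IsKCover (cU \ F) := by
  classical
  have key : ∀ K : Set X, IsCompact K → ∃ U ∈ cU \ F, K ⊆ U := by
    intro K hK
    let g : Set X → X := fun W => if hW : ∃ x, x ∉ W then hW.choose else Classical.arbitrary X
    have hg : ∀ W : Set X, W ≠ Set.univ → g W ∉ W := by
      intro W hW
      have hW' : ∃ x, x ∉ W := by
        rcases (Set.ne_univ_iff_exists_notMem W).mp hW with ⟨x, hx⟩; exact ⟨x, hx⟩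
      simp only [g, dif_pos hW']
      exact hW'.choose_spec
    obtain ⟨U, hU, hsub⟩ := h.2.2.2 (K ∪ g '' F) (hK.union (hF.image g).isCompact)
    refine ⟨U, ⟨hU, fun hUF => ?_⟩, Set.subset_union_left.trans hsub⟩
    exact hg U (h.ne_univ' hU) (hsub (Set.mem_union_right _ ⟨U, hUF, rfl⟩))
  refine ⟨fun U hU => h.1 U hU.1, ?_, fun h' => h.2.2.1 h'.1, key⟩
  apply Set.eq_univ_of_forall
  intro x
  obtain ⟨U, hU, hsub⟩ := key {x} isCompact_singleton
  exact Set.mem_sUnion.mpr ⟨U, hU, hsub rfl⟩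

/-- A γₖ-sequence: each compact set is contained in all but finitely many terms. -/
def IsGKSeq (W : ℕ → Set X) : Prop := ∀ K : Set X, IsCompact K → {n | ¬ K ⊆ W n}.Finite

lemma IsGKSeq.eq_univ_of_many {W : ℕ → Set X} (hseq : IsGKSeq W) {V : Set X} {S : Set ℕ}
    (hS : S.Infinite) (h : ∀ n ∈ S, W n ⊆ V) : V = Set.univ := by
  apply Set.eq_univ_of_forall
  intro x
  obtain ⟨n, hnS, hn⟩ := (hS.diff (hseq {x} isCompact_singleton)).nonempty
  have : {x} ⊆ W n := not_not.mp hn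
  exact h n hnS (this rfl)

lemma IsGKSeq.range_infinite {W : ℕ → Set X} (hseq : IsGKSeq W) {f : ℕ → Set X} {g : ℕ → ℕ}
    (hg : Function.Injective g) (hWf : ∀ j, W (g j) ⊆ f j) (hne : ∀ j, f j ≠ Set.univ) :
    (Set.range f).Infinite := by
  intro hfin
  haveI : Finite ↥(Set.range f) := hfin
  obtain ⟨V, hV⟩ := Finite.exists_infinite_fiber (Set.rangeFactorization f)
  have hT : {j | f j = (V : Set X)}.Infinite := by
    have h1 : (Set.rangeFactorization f ⁻¹' {V}).Infinite := Set.infinite_coe_iff.mp hV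
    apply h1.mono
    intro j hj
    have : Set.rangeFactorization f j = V := hj
    exact congrArg Subtype.val this
  obtain ⟨j₀, hj₀⟩ := hT.nonempty
  have hS : (g '' {j | f j = (V : Set X)}).Infinite := hT.image hg.injOn
  have : (V : Set X) = Set.univ := by
    apply hseq.eq_univ_of_many hS
    rintro n ⟨j, hj, rfl⟩
    exact (hWf j).trans (le_of_eq hj)
  exact hne j₀ (hj₀.trans this)

lemma engine_S1 {A : ℕ → Set (Set X)} (hA : ∀ n, IsKCover (A n)) {W : ℕ → Set X}
    (hseq : IsGKSeq W) (href : ∀ n, ∃ U ∈ A n, W n ⊆ U) :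
    ∃ b : ℕ → Set X, (∀ n, b n ∈ A n) ∧ IsGammaKCover (Set.range b) := by
  choose b hb hWb using href
  refine ⟨b, hb, ?_, ?_, ?_, ?_⟩
  · rintro U ⟨n, rfl⟩; exact (hA n).1 _ (hb n)
  · apply Set.eq_univ_of_forall
    intro x
    obtain ⟨n, hn⟩ := ((hseq {x} isCompact_singleton).infinite_compl).nonempty
    have : {x} ⊆ W n := not_not.mp hn
    exact Set.mem_sUnion.mpr ⟨b n, ⟨n, rfl⟩, hWb n (this rfl)⟩
  · exact hseq.range_infinite Function.injective_id (fun j => hWb j)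
      (fun j => (hA j).ne_univ' (hb j))
  · intro K hK
    apply ((hseq K hK).image b).subset
    rintro U ⟨⟨n, rfl⟩, hKU⟩
    exact ⟨n, fun h => hKU (h.trans (hWb n)), rfl⟩

lemma engine_A2 {A : ℕ → Set (Set X)} (hA : ∀ n, IsKCover (A n)) {W : ℕ → Set X}
    (hseq : IsGKSeq W) (href : ∀ n m, m ≤ n → ∃ U ∈ A m, W n ⊆ U) :
    ∃ B ∈ GammaKCovers X, ∀ n, (A n ∩ B).Infinite := by
  choose u hu hWu using href
  set B : Set (Set X) := {V | ∃ n m, ∃ h : m ≤ n, V = u n m h} with hBdef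
  have hmemB : ∀ n m (h : m ≤ n), u n m h ∈ B := fun n m h => ⟨n, m, h, rfl⟩
  have hBrange : ∀ n, {V | ∃ j, ∃ h : n ≤ j, V = u j n h} ⊆ A n ∩ B := by
    rintro n V ⟨j, hj, rfl⟩
    exact ⟨hu j n hj, hmemB j n hj⟩
  refine ⟨B, ⟨?_, ?_, ?_, ?_⟩, ?_⟩
  · rintro V ⟨n, m, h, rfl⟩; exact (hA m).1 _ (hu n m h)
  · apply Set.eq_univ_of_forall
    intro x
    obtain ⟨n, hn⟩ := ((hseq {x} isCompact_singleton).infinite_compl).nonempty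
    have hx : {x} ⊆ W n := not_not.mp hn
    exact Set.mem_sUnion.mpr ⟨u n 0 (Nat.zero_le n), hmemB n 0 (Nat.zero_le n),
      hWu n 0 (Nat.zero_le n) (hx rfl)⟩
  · have : (Set.range (fun n => u n 0 (Nat.zero_le n))).Infinite :=
      hseq.range_infinite Function.injective_id (fun j => hWu j 0 (Nat.zero_le j))
        (fun j => (hA 0).ne_univ' (hu j 0 (Nat.zero_le j)))
    apply this.mono
    rintro V ⟨n, rfl⟩
    exact hmemB n 0 (Nat.zero_le n)
  · intro K hK
    classical
    have hJ : {n | ¬ K ⊆ W n}.Finite := hseq K hK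
    have hsub : {V ∈ B | ¬ K ⊆ V} ⊆
        ⋃ n ∈ {n | ¬ K ⊆ W n}, {V | ∃ m, ∃ h : m ≤ n, V = u n m h} := by
      rintro V ⟨⟨n, m, h, rfl⟩, hKV⟩
      have hn : ¬ K ⊆ W n := fun hc => hKV (hc.trans (hWu n m h))
      exact Set.mem_biUnion hn ⟨m, h, rfl⟩
    refine (Set.Finite.biUnion hJ fun n _ => ?_).subset hsub
    have : {V | ∃ m, ∃ h : m ≤ n, V = u n m h} ⊆
        (fun m => if h : m ≤ n then u n m h else ∅) '' (Set.Iic n) := by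
      rintro V ⟨m, h, rfl⟩
      exact ⟨m, h, by simp [h]⟩
    exact ((Set.finite_Iic n).image _).subset this
  · intro n
    have : (Set.range (fun j => u (n + j) n (Nat.le_add_right n j))).Infinite := by
      refine hseq.range_infinite (g := fun j => n + j) (add_right_injective n)
        (fun j => hWu (n + j) n (Nat.le_add_right n j))
        (fun j => (hA n).ne_univ' (hu (n + j) n (Nat.le_add_right n j)))
    apply this.mono
    rintro V ⟨j, rfl⟩
    exact ⟨hu (n + j) n (Nat.le_add_right n j), hmemB (n + j) n (Nat.le_add_right n j)⟩

end AuxKGamma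
section AuxConstr

open Function Set

variable {X : Type u} [TopologicalSpace X] [Infinite X]

/-- Sets refinable into every member of the sequence of covers. -/
def CaseC (A : ℕ → Set (Set X)) : Set (Set X) :=
  {V | IsOpen V ∧ V ≠ Set.univ ∧ ∀ n, ∃ U ∈ A n, V ⊆ U}

/-- Intersections of one member from each of `A 0, …, A n`, containing `K₀`. -/
def meetAt (A : ℕ → Set (Set X)) (K₀ : Set X) (n : ℕ) : Set (Set X) :=
  {V | K₀ ⊆ V ∧ ∃ U : ℕ → Set X, (∀ i, U i ∈ A i) ∧ V = ⋂ i ∈ Finset.range (n + 1), U i}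

lemma meetAt_subset_mem {A : ℕ → Set (Set X)} {K₀ V : Set X} {n : ℕ}
    (hV : V ∈ meetAt A K₀ n) : ∀ m ≤ n, ∃ U ∈ A m, V ⊆ U := by
  obtain ⟨-, U, hU, rfl⟩ := hV
  intro m hm
  refine ⟨U m, hU m, fun x hx => ?_⟩
  exact Set.mem_iInter₂.mp hx m (Finset.mem_range.mpr (Nat.lt_succ_of_le hm))

lemma meetAt_ne_univ {A : ℕ → Set (Set X)} (hA : ∀ n, IsKCover (A n)) {K₀ V : Set X} {n : ℕ}
    (hV : V ∈ meetAt A K₀ n) : V ≠ Set.univ := by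
  intro h
  obtain ⟨U, hU, hsub⟩ := meetAt_subset_mem hV 0 (Nat.zero_le n)
  have : U = Set.univ := Set.eq_univ_of_univ_subset (h ▸ hsub)
  exact (hA 0).ne_univ' hU this

lemma meetAt_isOpen {A : ℕ → Set (Set X)} (hA : ∀ n, IsKCover (A n)) {K₀ V : Set X} {n : ℕ}
    (hV : V ∈ meetAt A K₀ n) : IsOpen V := by
  obtain ⟨-, U, hU, rfl⟩ := hV
  exact isOpen_biInter_finset fun i _ => (hA i).1 _ (hU i)

lemma meetAt_compact {A : ℕ → Set (Set X)} (hA : ∀ n, IsKCover (A n)) {K₀ : Set X}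
    (hK₀ : IsCompact K₀) (n : ℕ) :
    ∀ K : Set X, IsCompact K → ∃ V ∈ meetAt A K₀ n, K ⊆ V := by
  intro K hK
  have : ∀ i, ∃ U ∈ A i, K ∪ K₀ ⊆ U := fun i => (hA i).2.2.2 _ (hK.union hK₀)
  choose U hU hKU using this
  refine ⟨⋂ i ∈ Finset.range (n + 1), U i, ⟨?_, U, hU, rfl⟩, ?_⟩
  · exact Set.subset_iInter₂ fun i _ => Set.subset_union_right.trans (hKU i)
  · exact Set.subset_iInter₂ fun i _ => Set.subset_union_left.trans (hKU i)

lemma meetAt_kcover {A : ℕ → Set (Set X)} (hA : ∀ n, IsKCover (A n)) {K₀ : Set X}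
    (hK₀ : IsCompact K₀) (n : ℕ) : IsKCover (meetAt A K₀ n) := by
  refine ⟨fun V hV => meetAt_isOpen hA hV, ?_, fun h => meetAt_ne_univ hA h rfl,
    meetAt_compact hA hK₀ n⟩
  apply Set.eq_univ_of_forall
  intro x
  obtain ⟨V, hV, hsub⟩ := meetAt_compact hA hK₀ n {x} isCompact_singleton
  exact Set.mem_sUnion.mpr ⟨V, hV, hsub rfl⟩

lemma meetAt_finite_levels {A : ℕ → Set (Set X)} (hA : ∀ n, IsKCover (A n)) {K₀ : Set X}
    (hB : ∀ V ∈ CaseC A, ¬ K₀ ⊆ V) (V : Set X) : {n | V ∈ meetAt A K₀ n}.Finite := by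
  by_contra hinf
  replace hinf : {n | V ∈ meetAt A K₀ n}.Infinite := hinf
  obtain ⟨n₀, hn₀⟩ := hinf.nonempty
  have hVC : V ∈ CaseC A := by
    refine ⟨meetAt_isOpen hA hn₀, meetAt_ne_univ hA hn₀, fun m => ?_⟩
    obtain ⟨n, hn, hlt⟩ := hinf.exists_gt m
    exact meetAt_subset_mem hn m (le_of_lt hlt)
  exact hB V hVC hn₀.1

/-- Tail unions of the `meetAt` covers. -/
def tailUnion (A : ℕ → Set (Set X)) (K₀ : Set X) (j : ℕ) : Set (Set X) :=
  {V | ∃ n, j ≤ n ∧ V ∈ meetAt A K₀ n}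

lemma tailUnion_kcover {A : ℕ → Set (Set X)} (hA : ∀ n, IsKCover (A n)) {K₀ : Set X}
    (hK₀ : IsCompact K₀) (j : ℕ) : IsKCover (tailUnion A K₀ j) := by
  have key : ∀ K : Set X, IsCompact K → ∃ V ∈ tailUnion A K₀ j, K ⊆ V := by
    intro K hK
    obtain ⟨V, hV, hsub⟩ := meetAt_compact hA hK₀ j K hK
    exact ⟨V, ⟨j, le_refl j, hV⟩, hsub⟩
  refine ⟨?_, ?_, ?_, key⟩
  · rintro V ⟨n, -, hV⟩; exact meetAt_isOpen hA hV
  · apply Set.eq_univ_of_forall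
    intro x
    obtain ⟨V, hV, hsub⟩ := key {x} isCompact_singleton
    exact Set.mem_sUnion.mpr ⟨V, hV, hsub rfl⟩
  · rintro ⟨n, -, hV⟩; exact meetAt_ne_univ hA hV rfl

end AuxConstr
section AuxMain

open Function Set

variable {X : Type u} [TopologicalSpace X] [Infinite X]

lemma caseC_kcover {A : ℕ → Set (Set X)}
    (hC : ∀ K : Set X, IsCompact K → ∃ V ∈ CaseC A, K ⊆ V) : IsKCover (CaseC A) := by
  refine ⟨fun V hV => hV.1, ?_, fun h => h.2.1 rfl, hC⟩
  apply Set.eq_univ_of_forall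
  intro x
  obtain ⟨V, hV, hsub⟩ := hC {x} isCompact_singleton
  exact Set.mem_sUnion.mpr ⟨V, hV, hsub rfl⟩

lemma exists_seq_of_alpha4 (hL : KLindelof X) (h4 : Alpha4 (KCovers X) (GammaKCovers X))
    (A : ℕ → Set (Set X)) (hA : ∀ n, IsKCover (A n)) :
    ∃ W : ℕ → Set X, IsGKSeq W ∧ ∀ n m, m ≤ n → ∃ U ∈ A m, W n ⊆ U := by
  classical
  by_cases hC : ∀ K : Set X, IsCompact K → ∃ V ∈ CaseC A, K ⊆ V
  · obtain ⟨C₀, hsub, hcount, hcover⟩ := hL _ (caseC_kcover hC)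
    haveI : Countable ↥C₀ := hcount.to_subtype
    haveI : Infinite ↥C₀ := hcover.infinite'.to_subtype
    obtain ⟨e⟩ : Nonempty (ℕ ≃ ↥C₀) := nonempty_equiv_of_countable
    set f : ℕ → Set X := fun n => ((e n : ↥C₀) : Set X) with hf
    have hfinj : Injective f := Subtype.val_injective.comp e.injective
    have hfrange : Set.range f = C₀ := by
      ext V
      constructor
      · rintro ⟨n, rfl⟩; exact (e n).2
      · intro h; exact ⟨e.symm ⟨V, h⟩, by simp [hf]⟩
    have hT : ∀ j, IsKCover (C₀ \ f '' {m | m < j}) := fun j =>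
      hcover.diff_finite' ((Set.finite_lt_nat j).image f)
    obtain ⟨B, hB, hinf⟩ := h4 (fun j => C₀ \ f '' {m | m < j})
      (fun j => ⟨hT j, (hT j).infinite'⟩)
    have hBg : IsGammaKCover B := hB
    set M : Set ℕ := {m | f m ∈ B} with hM
    have hMinf : M.Infinite := by
      intro hMfin
      obtain ⟨N, hN⟩ := hMfin.bddAbove
      obtain ⟨j, hj, hjN⟩ := hinf.exists_gt N
      obtain ⟨V, hVT, hVB⟩ := hj
      have hVC₀ : V ∈ C₀ := hVT.1
      rw [← hfrange] at hVC₀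
      obtain ⟨m, rfl⟩ := hVC₀
      have hmM : m ∈ M := hVB
      exact hVT.2 ⟨m, lt_of_le_of_lt (hN hmM) hjN, rfl⟩
    haveI := hMinf.to_subtype
    set emb := Infinite.natEmbedding ↥M with hemb
    set W : ℕ → Set X := fun k => f ((emb k : ↥M) : ℕ) with hW
    have hWinj : Injective W :=
      hfinj.comp (Subtype.val_injective.comp emb.injective)
    refine ⟨W, ?_, ?_⟩
    · intro K hK
      have hbad := hBg.2.2.2 K hK
      have hsub2 : {k | ¬ K ⊆ W k} ⊆ W ⁻¹' {U ∈ B | ¬ K ⊆ U} := by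
        intro k hk
        exact ⟨(emb k).2, hk⟩
      exact (hbad.preimage hWinj.injOn).subset hsub2
    · intro n m _
      have hWn : W n ∈ C₀ := by rw [← hfrange]; exact ⟨_, rfl⟩
      exact (hsub hWn).2.2 m
  · push_neg at hC
    obtain ⟨K₀, hK₀, hB0⟩ := hC
    have hT := fun j => tailUnion_kcover hA hK₀ j
    obtain ⟨B, hB, hinf⟩ := h4 (tailUnion A K₀) (fun j => ⟨hT j, (hT j).infinite'⟩)
    have hBg : IsGammaKCover B := hB
    have hsel : ∀ k : ℕ, ∃ (V : Set X) (n : ℕ), k ≤ n ∧ V ∈ meetAt A K₀ n ∧ V ∈ B := by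
      intro k
      obtain ⟨j, hj, hkj⟩ := hinf.exists_gt k
      obtain ⟨V, hVT, hVB⟩ := hj
      obtain ⟨n, hjn, hVm⟩ := hVT
      exact ⟨V, n, le_trans (le_of_lt hkj) hjn, hVm, hVB⟩
    choose W nf hkn hWm hWB using hsel
    refine ⟨W, ?_, ?_⟩
    · intro K hK
      have hbad := hBg.2.2.2 K hK
      have hsub2 : {k | ¬ K ⊆ W k} ⊆ ⋃ U ∈ {U ∈ B | ¬ K ⊆ U}, {k | W k = U} := by
        intro k hk
        exact Set.mem_biUnion ⟨hWB k, hk⟩ rfl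
      refine (Set.Finite.biUnion hbad fun U _ => ?_).subset hsub2
      obtain ⟨N, hN⟩ := (meetAt_finite_levels hA hB0 U).bddAbove
      apply (Set.finite_Iic N).subset
      intro k hkU
      have hUm : U ∈ meetAt A K₀ (nf k) := hkU ▸ hWm k
      exact le_trans (hkn k) (hN hUm)
    · intro n m hmn
      exact meetAt_subset_mem (hWm n) m (le_trans hmn (hkn n))

lemma exists_seq_of_S1 (hL : KLindelof X) (hS : S1 (KCovers X) (GammaKCovers X))
    (A : ℕ → Set (Set X)) (hA : ∀ n, IsKCover (A n)) :
    ∃ W : ℕ → Set X, IsGKSeq W ∧ ∀ n m, m ≤ n → ∃ U ∈ A m, W n ⊆ U := by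
  classical
  by_cases hC : ∀ K : Set X, IsCompact K → ∃ V ∈ CaseC A, K ⊆ V
  · obtain ⟨C₀, hsub, hcount, hcover⟩ := hL _ (caseC_kcover hC)
    haveI : Countable ↥C₀ := hcount.to_subtype
    haveI : Infinite ↥C₀ := hcover.infinite'.to_subtype
    obtain ⟨e⟩ : Nonempty (ℕ ≃ ↥C₀) := nonempty_equiv_of_countable
    set f : ℕ → Set X := fun n => ((e n : ↥C₀) : Set X) with hf
    have hfinj : Injective f := Subtype.val_injective.comp e.injective
    have hfrange : Set.range f = C₀ := by
      ext V
      constructor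
      · rintro ⟨n, rfl⟩; exact (e n).2
      · intro h; exact ⟨e.symm ⟨V, h⟩, by simp [hf]⟩
    have hT : ∀ j, IsKCover (C₀ \ f '' {m | m < j}) := fun j =>
      hcover.diff_finite' ((Set.finite_lt_nat j).image f)
    obtain ⟨b, hb, hbr⟩ := hS (fun j => C₀ \ f '' {m | m < j}) (fun j => hT j)
    have hbg : IsGammaKCover (Set.range b) := hbr
    have hφ : ∀ j, ∃ m, f m = b j ∧ j ≤ m := by
      intro j
      have h1 : b j ∈ C₀ := (hb j).1
      rw [← hfrange] at h1
      obtain ⟨m, hm⟩ := h1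
      refine ⟨m, hm, ?_⟩
      by_contra hlt
      push_neg at hlt
      exact (hb j).2 ⟨m, hlt, hm⟩
    choose φ hφf hφge using hφ
    refine ⟨b, ?_, ?_⟩
    · intro K hK
      have hbad := hbg.2.2.2 K hK
      have hsub2 : {j | ¬ K ⊆ b j} ⊆ ⋃ U ∈ {U ∈ Set.range b | ¬ K ⊆ U}, {j | b j = U} :=
        fun j hj => Set.mem_biUnion ⟨⟨j, rfl⟩, hj⟩ rfl
      refine (Set.Finite.biUnion hbad fun U _ => ?_).subset hsub2
      by_cases hne : ∃ j₀, b j₀ = U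
      · obtain ⟨j₀, hj₀⟩ := hne
        apply (Set.finite_Iic (φ j₀)).subset
        intro j hj
        have he : f (φ j) = f (φ j₀) := by rw [hφf j, hφf j₀, hj, hj₀]
        exact le_trans (hφge j) (le_of_eq (hfinj he))
      · refine (Set.finite_empty).subset fun j hj => absurd ⟨j, hj⟩ hne
    · intro n m _
      exact (hsub (hb n).1).2.2 m
  · push_neg at hC
    obtain ⟨K₀, hK₀, hB0⟩ := hC
    obtain ⟨b, hb, hbr⟩ := hS (meetAt A K₀) (fun n => meetAt_kcover hA hK₀ n)
    have hbg : IsGammaKCover (Set.range b) := hbr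
    refine ⟨b, ?_, ?_⟩
    · intro K hK
      have hbad := hbg.2.2.2 K hK
      have hsub2 : {j | ¬ K ⊆ b j} ⊆ ⋃ U ∈ {U ∈ Set.range b | ¬ K ⊆ U}, {j | b j = U} :=
        fun j hj => Set.mem_biUnion ⟨⟨j, rfl⟩, hj⟩ rfl
      refine (Set.Finite.biUnion hbad fun U _ => ?_).subset hsub2
      apply (meetAt_finite_levels hA hB0 U).subset
      intro j hj
      exact hj ▸ hb j
    · intro n m hmn
      exact meetAt_subset_mem (hb n) m hmn

end AuxMain
/-- Theorem (α₂/α₃/α₄/S₁ for (𝒦,Γₖ) in k-Lindelöf non-compact spaces). -/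
theorem stmt2 (X : Type u) [TopologicalSpace X] [T2Space X] [Infinite X]
    (hL : KLindelof X) (hnc : ¬ CompactSpace X) :
    [Alpha2 (KCovers X) (GammaKCovers X),
     Alpha3 (KCovers X) (GammaKCovers X),
     Alpha4 (KCovers X) (GammaKCovers X),
     S1 (KCovers X) (GammaKCovers X)].TFAE := by
  tfae_have 1 → 2 := by
    intro h2 A hA
    obtain ⟨B, hB, h⟩ := h2 A hA
    exact ⟨B, hB, Set.infinite_univ.mono fun n _ => h n⟩
  tfae_have 2 → 3 := by
    intro h3 A hA
    obtain ⟨B, hB, h⟩ := h3 A hA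
    exact ⟨B, hB, h.mono fun n hn => hn.nonempty⟩
  tfae_have 3 → 4 := by
    intro h4 A hA
    obtain ⟨W, hseq, href⟩ := exists_seq_of_alpha4 hL h4 A (fun n => hA n)
    obtain ⟨b, hb, hr⟩ := engine_S1 (fun n => hA n) hseq (fun n => href n n le_rfl)
    exact ⟨b, hb, hr⟩
  tfae_have 4 → 1 := by
    intro hS A hA
    obtain ⟨W, hseq, href⟩ := exists_seq_of_S1 hL hS A (fun n => (hA n).1)
    exact engine_A2 (fun n => (hA n).1) hseq href
  tfae_finish
end

section
/- Let X be an infinite Hausdorff topological space. Then the following are equivalent: (1) X satisfies α₂(Γₖ,Γₖ); (2) X satisfies α₃(Γₖ,Γₖ); (3) X satisfies α₄(Γₖ,Γₖ); (4) X satisfies S₁(Γₖ,Γₖ). -/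
open Set Filter Pointwise

universe u

section Aux

noncomputable def itList {α : Type*} (step : List α → α) : ℕ → List α
  | 0 => []
  | n+1 => itList step n ++ [step (itList step n)]

noncomputable def itSeq {α : Type*} (step : List α → α) (n : ℕ) : α := step (itList step n)

lemma itList_length {α : Type*} (step : List α → α) (n : ℕ) : (itList step n).length = n := by
  induction n with
  | zero => rfl
  | succ n ih => simp [itList, ih]

lemma mem_itList {α : Type*} {step : List α → α} {n : ℕ} {x : α} :
    x ∈ itList step n ↔ ∃ i < n, itSeq step i = x := by
  induction n with
  | zero => simp [itList]
  | succ n ih =>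
    simp only [itList, List.mem_append, List.mem_singleton, ih]
    constructor
    · rintro (⟨i, hi, rfl⟩ | rfl)
      · exact ⟨i, Nat.lt_succ_of_lt hi, rfl⟩
      · exact ⟨n, Nat.lt_succ_self n, rfl⟩
    · rintro ⟨i, hi, rfl⟩
      rcases Nat.lt_succ_iff_lt_or_eq.mp hi with h | rfl
      · exact Or.inl ⟨i, h, rfl⟩
      · exact Or.inr rfl

variable {X : Type u} [TopologicalSpace X]

lemma gammaK_pick {cU : Set (Set X)} (hU : IsGammaKCover cU) (T : Set (Set X)) (hT : T.Finite)
    {K : Set X} (hK : IsCompact K) :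
    ∃ U, U ∈ cU ∧ U ∉ T ∧ U ≠ Set.univ ∧ K ⊆ U := by
  have hbad := hU.2.2.2 K hK
  have h2 : (cU \ ({U ∈ cU | ¬ K ⊆ U} ∪ (T ∪ {Set.univ}))).Nonempty :=
    (hU.2.2.1.diff (hbad.union (hT.union (Set.finite_singleton _)))).nonempty
  obtain ⟨U, hUcU, hUn⟩ := h2
  simp only [Set.mem_union, Set.mem_singleton_iff, Set.mem_setOf_eq, not_or] at hUn
  refine ⟨U, hUcU, hUn.2.1, hUn.2.2, ?_⟩
  by_contra h
  exact hUn.1 ⟨hUcU, h⟩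

lemma gammaK_badIdx {cU : Set (Set X)} (hU : IsGammaKCover cU) {u : ℕ → Set X}
    (hinj : Function.Injective u) (hmem : ∀ k, u k ∈ cU) {K : Set X} (hK : IsCompact K) :
    {k | ¬ K ⊆ u k}.Finite := by
  have h := hU.2.2.2 K hK
  have he : {k | ¬ K ⊆ u k} = u ⁻¹' {U ∈ cU | ¬ K ⊆ U} := by
    ext k; simp [hmem k]
  rw [he]
  exact h.preimage hinj.injOn

lemma gammaK_enum {cU : Set (Set X)} (hU : IsGammaKCover cU) (y : ℕ → X) :
    ∃ u : ℕ → Set X, Function.Injective u ∧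
      ∀ m, u m ∈ cU ∧ u m ≠ Set.univ ∧ ∀ j ≤ m, y j ∈ u m := by
  have hpick : ∀ l : List (Set X), ∃ U, U ∈ cU ∧ U ∉ {V | V ∈ l} ∧ U ≠ Set.univ ∧
      (y '' Set.Iic l.length) ⊆ U := fun l =>
    gammaK_pick hU _ l.finite_toSet ((Set.finite_Iic _).image y).isCompact
  choose step hstep using hpick
  refine ⟨itSeq step, ?_, ?_⟩
  · intro a b hab
    by_contra hne
    rcases Nat.lt_or_ge a b with h | h
    · have h1 : itSeq step a ∈ itList step b := mem_itList.mpr ⟨a, h, rfl⟩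
      rw [hab] at h1
      exact (hstep (itList step b)).2.1 h1
    · have h' : b < a := lt_of_le_of_ne h (Ne.symm hne)
      have h1 : itSeq step b ∈ itList step a := mem_itList.mpr ⟨b, h', rfl⟩
      rw [← hab] at h1
      exact (hstep (itList step a)).2.1 h1
  · intro m
    obtain ⟨h1, h2, h3, h4⟩ := hstep (itList step m)
    refine ⟨h1, h3, fun j hj => h4 ?_⟩
    exact ⟨j, by rw [itList_length]; exact hj, rfl⟩

lemma gammaK_tag [Nonempty X] {cU : Set (Set X)} (hU : IsGammaKCover cU) :
    ∃ (E : ℕ → Set X) (y : ℕ → X), Function.Injective E ∧ (∀ m, E m ∈ cU) ∧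
      (∀ j m, j ≤ m → y j ∈ E m) ∧ ∀ m, y (m+1) ∉ E m := by
  obtain ⟨y0⟩ := ‹Nonempty X›
  have hpick : ∀ l : List (Set X × X), ∃ p : Set X × X,
      p.1 ∈ cU ∧ p.1 ∉ Prod.fst '' {q | q ∈ l} ∧
      insert y0 (Prod.snd '' {q | q ∈ l}) ⊆ p.1 ∧ p.2 ∉ p.1 := by
    intro l
    obtain ⟨U, hU1, hU2, hU3, hU4⟩ := gammaK_pick hU (Prod.fst '' {q | q ∈ l})
      (l.finite_toSet.image _)
      (K := insert y0 (Prod.snd '' {q | q ∈ l}))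
      (((l.finite_toSet.image _).insert _).isCompact)
    obtain ⟨x, hx⟩ := (Set.ne_univ_iff_exists_notMem _).mp hU3
    exact ⟨(U, x), hU1, hU2, hU4, hx⟩
  choose step hstep using hpick
  refine ⟨fun m => (itSeq step m).1,
    fun j => Nat.casesOn j y0 (fun k => (itSeq step k).2), ?_, ?_, ?_, ?_⟩
  · intro a b hab
    by_contra hne
    rcases Nat.lt_or_ge a b with h | h
    · have h1 : itSeq step a ∈ itList step b := mem_itList.mpr ⟨a, h, rfl⟩
      exact (hstep (itList step b)).2.1 ⟨itSeq step a, h1, hab⟩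
    · have h' : b < a := lt_of_le_of_ne h (Ne.symm hne)
      have h1 : itSeq step b ∈ itList step a := mem_itList.mpr ⟨b, h', rfl⟩
      exact (hstep (itList step a)).2.1 ⟨itSeq step b, h1, hab.symm⟩
  · exact fun m => (hstep (itList step m)).1
  · intro j m hj
    have hsub := (hstep (itList step m)).2.2.1
    cases j with
    | zero => exact hsub (Set.mem_insert _ _)
    | succ k =>
      refine hsub (Set.mem_insert_of_mem _ ⟨itSeq step k, ?_, rfl⟩)
      exact mem_itList.mpr ⟨k, hj, rfl⟩
  · exact fun m => (hstep (itList step m)).2.2.2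

lemma core [Nonempty X]
    (h4 : Alpha4 (GammaKCovers X) (GammaKCovers X))
    (A : ℕ → Set (Set X)) (hA : ∀ n, IsGammaKCover (A n)) :
    ∃ (u : ℕ → ℕ → Set X) (S : Set ℕ) (m : ℕ → ℕ) (V : ℕ → Set X) (B₀ : Set (Set X)),
      (∀ i, Function.Injective (u i)) ∧ (∀ i k, u i k ∈ A i) ∧ (∀ i k, u i k ≠ Set.univ) ∧
      S.Infinite ∧ Set.InjOn m S ∧ Set.InjOn V S ∧ (∀ n ∈ S, V n ∈ B₀) ∧
      (∀ n ∈ S, ∀ i ≤ n, V n ⊆ u i (m n)) ∧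
      ∀ K : Set X, IsCompact K → {W ∈ B₀ | ¬ K ⊆ W}.Finite := by
  obtain ⟨E, y, hEinj, hEmem, hytag, hynot⟩ := gammaK_tag (hA 0)
  choose u hu using fun i => gammaK_enum (hA i) y
  set W : ℕ → ℕ → Set X := fun n m => E m ∩ ⋂ i ∈ Finset.range (n+1), u i m with hWdef
  have hWsubE : ∀ n m, W n m ⊆ E m := fun n m => Set.inter_subset_left
  have hWsubu : ∀ n m i, i ≤ n → W n m ⊆ u i m := by
    intro n m i hi
    refine Set.inter_subset_right.trans ?_
    exact Set.biInter_subset_of_mem (Finset.mem_range.mpr (Nat.lt_succ_of_le hi))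
  have hWmem : ∀ n m x, x ∈ E m → (∀ i, i ≤ n → x ∈ u i m) → x ∈ W n m := by
    intro n m x hx hx2
    exact ⟨hx, Set.mem_biInter fun i hi => hx2 i (Nat.lt_succ_iff.mp (Finset.mem_range.mp hi))⟩
  have hWne : ∀ {n n' m m' : ℕ}, m < m' → W n m ≠ W n' m' := by
    intro n n' m m' hlt heq
    have h1 : y (m+1) ∈ W n' m' :=
      hWmem _ _ _ (hytag _ _ hlt) (fun i _ => ((hu i).2 m').2.2 (m+1) hlt)
    have h2 : y (m+1) ∉ W n m := fun h => hynot m (hWsubE n m h)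
    rw [heq] at h2
    exact h2 h1
  have hWm : ∀ {n n' m m' : ℕ}, W n m = W n' m' → m = m' := by
    intro n n' m m' heq
    rcases lt_trichotomy m m' with h | h | h
    · exact absurd heq (hWne h)
    · exact h
    · exact absurd heq.symm (hWne h)
  have badW : ∀ (n : ℕ) (K : Set X), IsCompact K → {m | ¬ K ⊆ W n m}.Finite := by
    intro n K hK
    have hE := gammaK_badIdx (hA 0) hEinj hEmem hK
    have hui : ∀ i, {m | ¬ K ⊆ u i m}.Finite := fun i =>
      gammaK_badIdx (hA i) (hu i).1 (fun k => ((hu i).2 k).1) hK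
    refine Set.Finite.subset (hE.union
      (Set.Finite.biUnion (Finset.range (n+1)).finite_toSet (fun i _ => hui i))) ?_
    intro m hm
    by_contra hmm
    simp only [Set.mem_union, Set.mem_setOf_eq, Set.mem_iUnion, not_or, not_exists,
      not_not] at hmm
    refine hm ?_
    intro x hx
    exact hWmem n m x (hmm.1 hx)
      (fun i hi => hmm.2 i (Finset.mem_range.mpr (Nat.lt_succ_of_le hi)) hx)
  have pinj : ∀ n : ℕ, Function.Injective (Nat.pair n) := by
    intro n a b hab
    have := congrArg (fun x => (Nat.unpair x).2) hab
    simpa [Nat.unpair_pair] using this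
  set 𝒲 : ℕ → Set (Set X) := fun n => Set.range (fun k => W n (Nat.pair n k)) with h𝒲def
  have winj : ∀ n, Function.Injective (fun k => W n (Nat.pair n k)) := by
    intro n a b hab
    exact pinj n (hWm hab)
  have hcov : ∀ n, IsGammaKCover (𝒲 n) := by
    intro n
    refine ⟨?_, ?_, ?_, ?_⟩
    · rintro U ⟨k, rfl⟩
      exact ((hA 0).1 _ (hEmem _)).inter
        (isOpen_biInter_finset fun i _ => (hA i).1 _ ((hu i).2 _).1)
    · rw [Set.sUnion_eq_univ_iff]
      intro x
      have hb := badW n {x} isCompact_singleton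
      have hfin : {k | Nat.pair n k ∈ {m | ¬ ({x} : Set X) ⊆ W n m}}.Finite :=
        hb.preimage (pinj n).injOn
      obtain ⟨k, hk⟩ := (hfin.infinite_compl).nonempty
      simp only [Set.mem_compl_iff, Set.mem_setOf_eq, not_not] at hk
      exact ⟨W n (Nat.pair n k), ⟨k, rfl⟩, hk rfl⟩
    · exact Set.infinite_range_of_injective (winj n)
    · intro K hK
      have hfin : {k | Nat.pair n k ∈ {m | ¬ K ⊆ W n m}}.Finite :=
        (badW n K hK).preimage (pinj n).injOn
      refine Set.Finite.subset (hfin.image (fun k => W n (Nat.pair n k))) ?_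
      rintro U ⟨⟨k, rfl⟩, hbadU⟩
      exact ⟨k, hbadU, rfl⟩
  obtain ⟨B₀, hB₀, hS⟩ := h4 𝒲 (fun n => ⟨hcov n, (hcov n).2.2.1⟩)
  set S := {n | (𝒲 n ∩ B₀).Nonempty} with hSdef
  have hch : ∀ n, n ∈ S → ∃ k, W n (Nat.pair n k) ∈ B₀ := by
    rintro n ⟨V, hV𝒲, hVB⟩
    obtain ⟨k, rfl⟩ := hV𝒲
    exact ⟨k, hVB⟩
  classical
  set m : ℕ → ℕ := fun n => if h : n ∈ S then Nat.pair n (hch n h).choose else 0 with hmdef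
  set V : ℕ → Set X := fun n => W n (m n) with hVdef
  have hmS : ∀ n, n ∈ S → V n ∈ B₀ := by
    intro n h
    have : m n = Nat.pair n (hch n h).choose := by simp [hmdef, h]
    rw [hVdef]; simp only; rw [this]
    exact (hch n h).choose_spec
  have hmfst : ∀ n, n ∈ S → (Nat.unpair (m n)).1 = n := by
    intro n h
    simp [hmdef, h, Nat.unpair_pair]
  refine ⟨u, S, m, V, B₀, fun i => (hu i).1, fun i k => ((hu i).2 k).1,
    fun i k => ((hu i).2 k).2.1, hS, ?_, ?_, hmS, ?_, hB₀.2.2.2⟩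
  · intro a ha b hb hab
    rw [← hmfst a ha, ← hmfst b hb, hab]
  · intro a ha b hb hab
    have : m a = m b := hWm hab
    rw [← hmfst a ha, ← hmfst b hb, this]
  · intro n hn i hi
    exact hWsubu n (m n) i hi

lemma injOnN {α : Type*} {S : Set ℕ} {V : ℕ → α} (hVinj : Set.InjOn V S)
    {F : Set α} (hF : F.Finite) : {n | n ∈ S ∧ V n ∈ F}.Finite := by
  have h1 : (V '' {n | n ∈ S ∧ V n ∈ F}).Finite := by
    refine hF.subset ?_
    rintro _ ⟨n, ⟨hn, hVn⟩, rfl⟩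
    exact hVn
  exact Set.Finite.of_finite_image h1 (hVinj.mono fun n hn => hn.1)

lemma a4_to_a2 [Nonempty X] (h4 : Alpha4 (GammaKCovers X) (GammaKCovers X)) :
    Alpha2 (GammaKCovers X) (GammaKCovers X) := by
  intro A hA
  obtain ⟨u, S, m, V, B₀, huinj, humem, huniv, hSinf, hminj, hVinj, hVB, hVsub, hbad⟩ :=
    core h4 A (fun n => (hA n).1)
  refine ⟨{U | ∃ n ∈ S, ∃ i ≤ n, U = u i (m n)}, ⟨?_, ?_, ?_, ?_⟩, ?_⟩
  · rintro U ⟨n, hn, i, hi, rfl⟩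
    exact (hA i).1.1 _ (humem i _)
  · rw [Set.sUnion_eq_univ_iff]
    intro x
    have hF := hbad {x} isCompact_singleton
    have hN := injOnN hVinj hF
    obtain ⟨n, hn⟩ := (hSinf.diff hN).nonempty
    have hnS : n ∈ S := hn.1
    have hxV : x ∈ V n := by
      by_contra hx
      exact hn.2 ⟨hnS, hVB n hnS, by simpa using hx⟩
    exact ⟨u 0 (m n), ⟨n, hnS, 0, Nat.zero_le n, rfl⟩, hVsub n hnS 0 (Nat.zero_le n) hxV⟩
  · refine Set.Infinite.mono ?_ (hSinf.image (f := fun n => u 0 (m n)) ?_)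
    · rintro _ ⟨n, hn, rfl⟩
      exact ⟨n, hn, 0, Nat.zero_le n, rfl⟩
    · intro a ha b hb hab
      exact hminj ha hb (huinj 0 hab)
  · intro K hK
    have hF := hbad K hK
    have hN := injOnN hVinj hF
    refine Set.Finite.subset (hN.biUnion (fun n _ => (Set.finite_Iic n).image
      (fun i => u i (m n)))) ?_
    rintro U ⟨⟨n, hn, i, hi, rfl⟩, hKU⟩
    have hnV : ¬ K ⊆ V n := fun h => hKU (h.trans (hVsub n hn i hi))
    exact Set.mem_biUnion ⟨hn, hVB n hn, hnV⟩ ⟨i, Set.mem_Iic.mpr hi, rfl⟩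
  · intro j
    refine Set.Infinite.mono (s := (fun n => u j (m n)) '' (S ∩ Set.Ici j)) ?_ ?_
    · rintro _ ⟨n, ⟨hnS, hnj⟩, rfl⟩
      exact ⟨humem j _, n, hnS, j, hnj, rfl⟩
    · have hinf : (S ∩ Set.Ici j).Infinite := by
        have : S ∩ Set.Ici j = S \ Set.Iio j := by
          ext n; simp [Set.mem_Ici, Set.mem_Iio, not_lt]
        rw [this]
        exact hSinf.diff (Set.finite_Iio j)
      exact hinf.image (fun a ha b hb hab => hminj ha.1 hb.1 (huinj j hab))

lemma a4_to_s1 [Nonempty X] (h4 : Alpha4 (GammaKCovers X) (GammaKCovers X)) :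
    S1 (GammaKCovers X) (GammaKCovers X) := by
  intro A hA
  obtain ⟨u, S, m, V, B₀, huinj, humem, huniv, hSinf, hminj, hVinj, hVB, hVsub, hbad⟩ :=
    core h4 A hA
  have hnk : ∀ k : ℕ, ∃ n, n ∈ S ∧ k < n := by
    intro k
    obtain ⟨n, hn⟩ := (hSinf.diff (Set.finite_Iic k)).nonempty
    exact ⟨n, hn.1, by simpa [Set.mem_Iic, not_le] using hn.2⟩
  choose nk hnkS hnkgt using hnk
  set b : ℕ → Set X := fun k => u k (m (nk k)) with hbdef
  have hbV : ∀ k, V (nk k) ⊆ b k := fun k =>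
    hVsub (nk k) (hnkS k) k (le_of_lt (hnkgt k))
  have hbadk : ∀ K : Set X, IsCompact K → {k | ¬ K ⊆ b k}.Finite := by
    intro K hK
    have hN := injOnN hVinj (hbad K hK)
    obtain ⟨c, hc⟩ := hN.bddAbove
    refine (Set.finite_Iic c).subset ?_
    intro k hk
    have hVn : ¬ K ⊆ V (nk k) := fun h => hk (h.trans (hbV k))
    have : nk k ∈ {n | n ∈ S ∧ V n ∈ {W | W ∈ B₀ ∧ ¬ K ⊆ W}} :=
      ⟨hnkS k, hVB _ (hnkS k), hVn⟩
    exact Set.mem_Iic.mpr (le_of_lt (lt_of_lt_of_le (hnkgt k) (hc this)))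
  refine ⟨b, fun k => humem k _, ⟨?_, ?_, ?_, ?_⟩⟩
  · rintro U ⟨k, rfl⟩
    exact (hA k).1 _ (humem k _)
  · rw [Set.sUnion_eq_univ_iff]
    intro x
    obtain ⟨k, hk⟩ := ((hbadk {x} isCompact_singleton).infinite_compl).nonempty
    simp only [Set.mem_compl_iff, Set.mem_setOf_eq, not_not] at hk
    exact ⟨b k, ⟨k, rfl⟩, hk rfl⟩
  · by_contra hfin
    rw [Set.not_infinite] at hfin
    haveI : Finite ↥(Set.range b) := hfin.to_subtype
    obtain ⟨U₀, hU₀⟩ := Finite.exists_infinite_fiber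
      (fun k => (⟨b k, Set.mem_range_self k⟩ : Set.range b))
    have hfib : {k | b k = (U₀ : Set X)}.Infinite := by
      have h1 : ((fun k => (⟨b k, Set.mem_range_self k⟩ : Set.range b)) ⁻¹' {U₀}).Infinite :=
        Set.infinite_coe_iff.mp hU₀
      have h2 : ((fun k => (⟨b k, Set.mem_range_self k⟩ : Set.range b)) ⁻¹' {U₀}) =
          {k | b k = (U₀ : Set X)} := by
        ext k
        simp [Subtype.ext_iff]
      rwa [h2] at h1
    have hU₀univ : (U₀ : Set X) = Set.univ := by
      rw [Set.eq_univ_iff_forall]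
      intro x
      obtain ⟨k, hk⟩ := (hfib.diff (hbadk {x} isCompact_singleton)).nonempty
      have hx : ({x} : Set X) ⊆ b k := by
        have := hk.2
        simpa [Set.mem_setOf_eq] using this
      rw [hk.1] at hx
      exact hx rfl
    obtain ⟨k, hk⟩ := hfib.nonempty
    exact huniv k _ (hk.trans hU₀univ)
  · intro K hK
    refine Set.Finite.subset ((hbadk K hK).image b) ?_
    rintro U ⟨⟨k, rfl⟩, hKU⟩
    exact ⟨k, hKU, rfl⟩

end Aux

/-- Theorem (α₂/α₃/α₄/S₁ for (Γₖ,Γₖ)). -/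
theorem stmt4 (X : Type u) [TopologicalSpace X] [T2Space X] [Infinite X] :
    [Alpha2 (GammaKCovers X) (GammaKCovers X),
     Alpha3 (GammaKCovers X) (GammaKCovers X),
     Alpha4 (GammaKCovers X) (GammaKCovers X),
     S1 (GammaKCovers X) (GammaKCovers X)].TFAE := by
  haveI : Nonempty X := ⟨Classical.ofNonempty⟩
  tfae_have 1 → 2 := by
    intro h A hA
    obtain ⟨B, hB, h2⟩ := h A hA
    refine ⟨B, hB, ?_⟩
    have he : {n : ℕ | (A n ∩ B).Infinite} = Set.univ := Set.eq_univ_of_forall h2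
    rw [he]
    exact Set.infinite_univ
  tfae_have 2 → 3 := by
    intro h A hA
    obtain ⟨B, hB, h2⟩ := h A hA
    exact ⟨B, hB, h2.mono (fun n hn => hn.nonempty)⟩
  tfae_have 3 → 1 := fun h => a4_to_a2 h
  tfae_have 3 → 4 := fun h => a4_to_s1 h
  tfae_have 4 → 3 := by
    intro h A hA
    obtain ⟨b, hb, hr⟩ := h A (fun n => (hA n).1)
    refine ⟨Set.range b, hr, ?_⟩
    have he : {n : ℕ | (A n ∩ Set.range b).Nonempty} = Set.univ :=
      Set.eq_univ_of_forall (fun n => ⟨b n, hb n, Set.mem_range_self n⟩)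
    rw [he]
    exact Set.infinite_univ
  tfae_finish
end

section
/- Let X be an infinite Hausdorff space all of whose open subspaces are k-Lindelöf, and let E be a closed subset of X (viewed as a point of 2^X with the upper Fell topology). Then the following are equivalent: (1) (2^X, F⁺) satisfies α₄(Ω_E, Σ_E); (2) (2^X, F⁺) satisfies S₁(Ω_E, Σ_E). -/
open Set Filter Pointwise

universe u

/-! ### Auxiliary machinery for the proof -/

section FellAux

open TopologicalSpace

variable {X : Type u} [TopologicalSpace X]

/-- The canonical basis of the upper Fell topology. -/
def fellBasis (X : Type u) [TopologicalSpace X] : Set (Set (HClosed X)) :=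
  {S | ∃ K : Set X, IsCompact K ∧ K.Nonempty ∧ S = {F : HClosed X | F.1 ⊆ Kᶜ}} ∪ {Set.univ}

lemma fellBasis_isBasis : IsTopologicalBasis (fellBasis X) := by
  refine ⟨?_, ?_, rfl⟩
  · rintro t₁ ht₁ t₂ ht₂ x hx
    rcases ht₁ with ⟨K₁, hK₁c, hK₁n, rfl⟩ | h₁
    · rcases ht₂ with ⟨K₂, hK₂c, hK₂n, rfl⟩ | h₂
      · refine ⟨{F : HClosed X | F.1 ⊆ (K₁ ∪ K₂)ᶜ},
          Or.inl ⟨K₁ ∪ K₂, hK₁c.union hK₂c, hK₁n.inl, rfl⟩, ?_, ?_⟩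
        · show x.1 ⊆ (K₁ ∪ K₂)ᶜ
          rw [Set.compl_union]
          exact Set.subset_inter hx.1 hx.2
        · intro F hF
          have hF' : F.1 ⊆ K₁ᶜ ∩ K₂ᶜ := by
            rw [← Set.compl_union]; exact hF
          exact ⟨fun y hy => (hF' hy).1, fun y hy => (hF' hy).2⟩
      · rw [Set.mem_singleton_iff] at h₂; subst h₂
        exact ⟨_, Or.inl ⟨K₁, hK₁c, hK₁n, rfl⟩, hx.1, fun F hF => ⟨hF, Set.mem_univ F⟩⟩
    · rw [Set.mem_singleton_iff] at h₁; subst h₁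
      exact ⟨t₂, ht₂, hx.2, fun F hF => ⟨Set.mem_univ F, hF⟩⟩
  · exact Set.sUnion_eq_univ_iff.mpr fun x => ⟨Set.univ, Or.inr rfl, trivial⟩

lemma mem_closure_fell {E : HClosed X} {A : Set (HClosed X)} :
    E ∈ closure A ↔ A.Nonempty ∧
      ∀ K : Set X, IsCompact K → K.Nonempty → K ⊆ (E.1)ᶜ → ∃ F ∈ A, F.1 ⊆ Kᶜ := by
  rw [(fellBasis_isBasis (X := X)).mem_closure_iff]
  constructor
  · intro h
    constructor
    · obtain ⟨F, _, hF⟩ := h Set.univ (Or.inr rfl) (Set.mem_univ E)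
      exact ⟨F, hF⟩
    · intro K hc hn hKY
      have hE : E ∈ {F : HClosed X | F.1 ⊆ Kᶜ} := fun x hx hxK => hKY hxK hx
      obtain ⟨F, hF1, hF2⟩ := h _ (Or.inl ⟨K, hc, hn, rfl⟩) hE
      exact ⟨F, hF2, hF1⟩
  · rintro ⟨hne, hav⟩ o ho hEo
    rcases ho with ⟨K, hc, hn, rfl⟩ | ho
    · obtain ⟨F, hF, hFK⟩ := hav K hc hn (fun x hxK hxE => hEo hxE hxK)
      exact ⟨F, hFK, hF⟩
    · rw [Set.mem_singleton_iff] at ho; subst ho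
      simpa using hne

lemma tendsto_fell {E : HClosed X} {f : ℕ → HClosed X} :
    Filter.Tendsto f Filter.atTop (nhds E) ↔
      ∀ K : Set X, IsCompact K → K.Nonempty → K ⊆ (E.1)ᶜ →
        ∀ᶠ n in Filter.atTop, (f n).1 ⊆ Kᶜ := by
  rw [(fellBasis_isBasis (X := X)).nhds_hasBasis.tendsto_right_iff]
  constructor
  · intro h K hc hn hKY
    exact h _ ⟨Or.inl ⟨K, hc, hn, rfl⟩, fun x hx hxK => hKY hxK hx⟩
  · rintro h o ⟨ho, hEo⟩
    rcases ho with ⟨K, hc, hn, rfl⟩ | ho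
    · exact h K hc hn (fun x hxK hxE => hEo hxE hxK)
    · rw [Set.mem_singleton_iff] at ho; subst ho
      exact Filter.Eventually.of_forall fun n => Set.mem_univ _

/-- Using k-Lindelöfness of `Eᶜ`, refine a set witnessing `Ω_E`-type avoidance
to a countable one. -/
lemma exists_countable_refine
    (hkL : ∀ U : Set X, IsOpen U → KLindelof U)
    (E : HClosed X) (A : Set (HClosed X))
    (hmeet : ∀ F ∈ A, (F.1 ∩ (E.1)ᶜ).Nonempty)
    (hav : ∀ K : Set X, IsCompact K → K.Nonempty → K ⊆ (E.1)ᶜ → ∃ F ∈ A, F.1 ⊆ Kᶜ)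
    (hY : ((E.1)ᶜ).Nonempty) :
    ∃ A' ⊆ A, A'.Countable ∧
      ∀ K : Set X, IsCompact K → K.Nonempty → K ⊆ (E.1)ᶜ → ∃ F ∈ A', F.1 ⊆ Kᶜ := by
  classical
  have hYopen : IsOpen ((E.1)ᶜ) := E.2.isOpen_compl
  have hKL := hkL ((E.1)ᶜ) hYopen
  set cU : Set (Set ((E.1)ᶜ : Set X)) :=
    (fun F : HClosed X => (Subtype.val ⁻¹' (F.1)ᶜ : Set ((E.1)ᶜ : Set X))) '' A with hcU
  have hopen : ∀ V ∈ cU, IsOpen V := by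
    rintro V ⟨F, hF, rfl⟩
    exact (F.2.isOpen_compl).preimage continuous_subtype_val
  have hcover : ⋃₀ cU = Set.univ := by
    rw [Set.sUnion_eq_univ_iff]
    intro y
    obtain ⟨F, hF, hFK⟩ := hav {y.1} isCompact_singleton ⟨y.1, rfl⟩
      (Set.singleton_subset_iff.mpr y.2)
    exact ⟨_, ⟨F, hF, rfl⟩, fun h => hFK h rfl⟩
  have huniv : Set.univ ∉ cU := by
    rintro ⟨F, hF, hFeq⟩
    obtain ⟨x, hxF, hxY⟩ := hmeet F hF
    have hFeq' : (Subtype.val ⁻¹' (F.1)ᶜ : Set ((E.1)ᶜ : Set X)) = Set.univ := hFeq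
    have : (⟨x, hxY⟩ : ((E.1)ᶜ : Set X)) ∈ (Subtype.val ⁻¹' (F.1)ᶜ : Set ((E.1)ᶜ : Set X)) := by
      rw [hFeq']; trivial
    exact this hxF
  have hk : ∀ K' : Set ((E.1)ᶜ : Set X), IsCompact K' → ∃ V ∈ cU, K' ⊆ V := by
    intro K' hK'
    rcases Set.eq_empty_or_nonempty K' with rfl | hne
    · obtain ⟨F, hF, _⟩ := hav {hY.choose} isCompact_singleton ⟨_, rfl⟩
        (Set.singleton_subset_iff.mpr hY.choose_spec)
      exact ⟨_, ⟨F, hF, rfl⟩, Set.empty_subset _⟩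
    · have hKc : IsCompact (Subtype.val '' K') := hK'.image continuous_subtype_val
      have hKY : Subtype.val '' K' ⊆ (E.1)ᶜ := by
        rintro _ ⟨z, hz, rfl⟩; exact z.2
      obtain ⟨F, hF, hFK⟩ := hav _ hKc (hne.image _) hKY
      exact ⟨_, ⟨F, hF, rfl⟩, fun z hz h => hFK h ⟨z, hz, rfl⟩⟩
  obtain ⟨cV, hsubV, hcntV, hkV⟩ := hKL cU ⟨hopen, hcover, huniv, hk⟩
  set pick : Set ((E.1)ᶜ : Set X) → HClosed X := fun V =>
    if h : ∃ F ∈ A, (Subtype.val ⁻¹' (F.1)ᶜ : Set ((E.1)ᶜ : Set X)) = V then h.choose else E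
    with hpick
  refine ⟨pick '' cV, ?_, hcntV.image _, ?_⟩
  · rintro _ ⟨V, hV, rfl⟩
    have h : ∃ F ∈ A, (Subtype.val ⁻¹' (F.1)ᶜ : Set ((E.1)ᶜ : Set X)) = V := hsubV hV
    have hpv : pick V = h.choose := dif_pos h
    rw [hpv]
    exact h.choose_spec.1
  · intro K hc hn hKY
    have hK' : IsCompact (Subtype.val ⁻¹' K : Set ((E.1)ᶜ : Set X)) := by
      rw [Subtype.isCompact_iff]
      have heq : Subtype.val '' (Subtype.val ⁻¹' K : Set ((E.1)ᶜ : Set X)) = K := by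
        rw [Set.image_preimage_eq_inter_range, Subtype.range_coe, Set.inter_eq_left]
        exact hKY
      rwa [heq]
    obtain ⟨V, hV, hKV⟩ := hkV.2.2.2 _ hK'
    have h : ∃ F ∈ A, (Subtype.val ⁻¹' (F.1)ᶜ : Set ((E.1)ᶜ : Set X)) = V := hsubV hV
    refine ⟨pick V, Set.mem_image_of_mem _ hV, ?_⟩
    have hpv : pick V = h.choose := dif_pos h
    rw [hpv]
    intro x hx hxK
    have hxY : x ∈ (E.1)ᶜ := hKY hxK
    have hmem : (⟨x, hxY⟩ : ((E.1)ᶜ : Set X)) ∈ V := hKV hxK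
    rw [← h.choose_spec.2] at hmem
    exact hmem hx

/-- Union of two closed sets, in the hyperspace. -/
def hjoin {X : Type u} [TopologicalSpace X] (a b : HClosed X) : HClosed X :=
  ⟨a.1 ∪ b.1, a.2.union b.2⟩

/-- Level-`k` finite unions of one member from each `A' j`, `j ≤ k`, together with `E`. -/
def levelU {X : Type u} [TopologicalSpace X] (E : HClosed X)
    (A' : ℕ → Set (HClosed X)) : ℕ → Set (HClosed X)
  | 0 => (fun F => hjoin F E) '' A' 0
  | (k+1) => Set.image2 hjoin (levelU E A' k) (A' (k+1))

/-- Core combinatorial step: from `α₄` and countable avoidance families, select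
one member from each family, converging to `E` in the compact-avoidance sense. -/
lemma core_selection (E : HClosed X)
    (hα : Alpha4 (OmegaPt E) (SigmaPt E))
    (A' : ℕ → Set (HClosed X))
    (hcnt : ∀ j, (A' j).Countable)
    (hmeet : ∀ j, ∀ F ∈ A' j, (F.1 ∩ (E.1)ᶜ).Nonempty)
    (hav : ∀ j, ∀ K : Set X, IsCompact K → K.Nonempty → K ⊆ (E.1)ᶜ → ∃ F ∈ A' j, F.1 ⊆ Kᶜ)
    (hY : ((E.1)ᶜ).Nonempty) :
    ∃ g : ℕ → HClosed X, (∀ j, g j ∈ A' j) ∧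
      ∀ K : Set X, IsCompact K → K.Nonempty → K ⊆ (E.1)ᶜ →
        {j : ℕ | ¬ (g j).1 ⊆ Kᶜ}.Finite := by
  classical
  set U : ℕ → Set (HClosed X) := levelU E A' with hU
  have pU1 : ∀ k, ∀ W ∈ U k, E.1 ⊆ W.1 ∧ (W.1 ∩ (E.1)ᶜ).Nonempty := by
    intro k
    induction k with
    | zero =>
      rintro W ⟨F, hF, rfl⟩
      refine ⟨Set.subset_union_right, ?_⟩
      obtain ⟨x, hxF, hxY⟩ := hmeet 0 F hF
      exact ⟨x, Or.inl hxF, hxY⟩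
    | succ k ih =>
      rintro W ⟨W', hW', F, hF, rfl⟩
      obtain ⟨h1, x, hx1, hx2⟩ := ih W' hW'
      exact ⟨h1.trans Set.subset_union_left, x, Or.inl hx1, hx2⟩
  have pU2 : ∀ k, ∀ W ∈ U k, ∀ j ≤ k, ∃ G ∈ A' j, G.1 ⊆ W.1 := by
    intro k
    induction k with
    | zero =>
      rintro W ⟨F, hF, rfl⟩ j hj
      interval_cases j
      exact ⟨F, hF, Set.subset_union_left⟩
    | succ k ih =>
      rintro W ⟨W', hW', F, hF, rfl⟩ j hj
      rcases eq_or_lt_of_le hj with rfl | h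
      · exact ⟨F, hF, Set.subset_union_right⟩
      · obtain ⟨G, hG, hGs⟩ := ih W' hW' j (Nat.lt_succ_iff.mp h)
        exact ⟨G, hG, hGs.trans Set.subset_union_left⟩
  have pU3 : ∀ k, ∀ K : Set X, IsCompact K → K.Nonempty → K ⊆ (E.1)ᶜ →
      ∃ W ∈ U k, W.1 ⊆ Kᶜ := by
    intro k
    induction k with
    | zero =>
      intro K hc hn hKY
      obtain ⟨F, hF, hFK⟩ := hav 0 K hc hn hKY
      exact ⟨hjoin F E, ⟨F, hF, rfl⟩,
        Set.union_subset hFK (fun x hx hxK => hKY hxK hx)⟩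
    | succ k ih =>
      intro K hc hn hKY
      obtain ⟨W', hW', hW'K⟩ := ih K hc hn hKY
      obtain ⟨F, hF, hFK⟩ := hav (k+1) K hc hn hKY
      exact ⟨hjoin W' F, ⟨W', hW', F, hF, rfl⟩, Set.union_subset hW'K hFK⟩
  have pUcnt : ∀ k, (U k).Countable := by
    intro k
    induction k with
    | zero => exact (hcnt 0).image _
    | succ k ih => exact ih.image2 (hcnt (k+1)) _
  have pU3' : ∀ k, ∀ K : Set X, IsCompact K → K.Nonempty → K ⊆ (E.1)ᶜ →
      ∀ Fs : Set (HClosed X), Fs.Finite → (∀ G ∈ Fs, (G.1 ∩ (E.1)ᶜ).Nonempty) →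
      ∃ W ∈ U k, W ∉ Fs ∧ W.1 ⊆ Kᶜ := by
    intro k K hc hn hKY Fs hFs hFsm
    set pt : HClosed X → X := fun G =>
      if h : (G.1 ∩ (E.1)ᶜ).Nonempty then h.choose else hY.choose with hpt
    have hptmem : ∀ G ∈ Fs, pt G ∈ G.1 ∩ (E.1)ᶜ := by
      intro G hG
      have h := hFsm G hG
      have : pt G = h.choose := dif_pos h
      rw [this]
      exact h.choose_spec
    have hT : (pt '' Fs).Finite := hFs.image _
    have hTY : pt '' Fs ⊆ (E.1)ᶜ := by
      rintro _ ⟨G, hG, rfl⟩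
      exact (hptmem G hG).2
    obtain ⟨W, hW, hWK⟩ := pU3 k (K ∪ pt '' Fs) (hc.union hT.isCompact) hn.inl
      (Set.union_subset hKY hTY)
    refine ⟨W, hW, ?_, fun x hx hxK => hWK hx (Or.inl hxK)⟩
    intro hWFs
    exact hWK (hptmem W hWFs).1 (Or.inr (Set.mem_image_of_mem _ hWFs))
  have pUinf : ∀ k, (U k).Infinite := by
    intro k
    by_contra hfin
    rw [Set.not_infinite] at hfin
    obtain ⟨W, hW, hWn, _⟩ := pU3' k {hY.choose} isCompact_singleton ⟨_, rfl⟩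
      (Set.singleton_subset_iff.mpr hY.choose_spec) (U k) hfin
      (fun G hG => (pU1 k G hG).2)
    exact hWn hW
  have hWcnt : (⋃ k, U k).Countable := Set.countable_iUnion pUcnt
  have hWne : (⋃ k, U k).Nonempty := by
    obtain ⟨W, hW, _⟩ := pU3 0 {hY.choose} isCompact_singleton ⟨_, rfl⟩
      (Set.singleton_subset_iff.mpr hY.choose_spec)
    exact ⟨W, Set.mem_iUnion.mpr ⟨0, hW⟩⟩
  obtain ⟨w, hw⟩ := hWcnt.exists_eq_range hWne
  set D : ℕ → Set (HClosed X) := fun k => U k \ (w '' Set.Iio k) with hD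
  have hDU : ∀ k, D k ⊆ U k := fun k => Set.diff_subset
  have hwUk : ∀ i, ∃ k, w i ∈ U k := by
    intro i
    have : w i ∈ ⋃ k, U k := by rw [hw]; exact Set.mem_range_self i
    exact Set.mem_iUnion.mp this
  have hwmeet : ∀ i, ((w i).1 ∩ (E.1)ᶜ).Nonempty :=
    fun i => (pU1 _ _ (hwUk i).choose_spec).2
  have hDmem : ∀ k, D k ∈ OmegaPt E ∧ (D k).Infinite := by
    intro k
    have hfinim : (w '' Set.Iio k).Finite := (Set.finite_Iio k).image _
    refine ⟨⟨?_, ?_⟩, (pUinf k).diff hfinim⟩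
    · intro W hW
      have hWm := (pU1 k W (hDU k hW)).2
      simp only [Set.mem_compl_iff, Set.mem_singleton_iff]
      rintro rfl
      obtain ⟨x, hx1, hx2⟩ := hWm
      exact hx2 hx1
    · rw [mem_closure_fell]
      have himmeet : ∀ G ∈ w '' Set.Iio k, (G.1 ∩ (E.1)ᶜ).Nonempty := by
        rintro _ ⟨i, _, rfl⟩
        exact hwmeet i
      constructor
      · obtain ⟨W, hWU, hWn, _⟩ := pU3' k {hY.choose} isCompact_singleton ⟨_, rfl⟩
          (Set.singleton_subset_iff.mpr hY.choose_spec) _ hfinim himmeet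
        exact ⟨W, hWU, hWn⟩
      · intro K hc hn hKY
        obtain ⟨W, hWU, hWn, hWK⟩ := pU3' k K hc hn hKY _ hfinim himmeet
        exact ⟨W, ⟨hWU, hWn⟩, hWK⟩
  obtain ⟨B, hB, hI⟩ := hα D hDmem
  obtain ⟨f, hfne, hft, rfl⟩ := hB
  have hfD : ∀ m k, f m ∈ D k → ∃ i, w i = f m := by
    intro m k hm
    have : f m ∈ ⋃ k', U k' := Set.mem_iUnion.mpr ⟨k, hDU k hm⟩
    rw [hw] at this
    exact this
  have key : ∀ k₀ m₀ : ℕ, ∃ k, k₀ < k ∧ ∃ m, m₀ < m ∧ f m ∈ D k := by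
    intro k₀ m₀
    by_contra hcon
    push_neg at hcon
    have hbadfin : ∀ m, {k : ℕ | f m ∈ D k}.Finite := by
      intro m
      by_cases hm : ∃ i, w i = f m
      · obtain ⟨i, hi⟩ := hm
        apply Set.Finite.subset (Set.finite_Iic i)
        intro k hk
        by_contra hik
        simp only [Set.mem_Iic, not_le] at hik
        exact hk.2 ⟨i, Set.mem_Iio.mpr hik, hi⟩
      · apply Set.Finite.subset Set.finite_empty
        intro k hk
        exact absurd (hfD m k hk) hm
    have hBad : (⋃ m ∈ Set.Iic m₀, {k : ℕ | f m ∈ D k}).Finite :=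
      (Set.finite_Iic m₀).biUnion (fun m _ => hbadfin m)
    obtain ⟨k, hk⟩ := (hI.diff (hBad.union (Set.finite_Iic k₀))).nonempty
    obtain ⟨x, hxD, hxr⟩ := hk.1
    obtain ⟨m, rfl⟩ := hxr
    have hkk₀ : k₀ < k := by
      by_contra h
      exact hk.2 (Or.inr (by simpa using Nat.le_of_not_lt h))
    rcases le_or_gt m m₀ with hm | hm
    · exact hk.2 (Or.inl (Set.mem_biUnion hm hxD))
    · exact hcon k hkk₀ m hm hxD
  choose k' hk1 m' hm1 hmem using key
  set km : ℕ → ℕ × ℕ := fun i =>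
    Nat.rec (k' 0 0, m' 0 0) (fun _ p => (k' p.1 p.2, m' p.1 p.2)) i with hkm
  have hkmD : ∀ i, f (km i).2 ∈ D (km i).1 := by
    intro i
    cases i with
    | zero => exact hmem 0 0
    | succ n => exact hmem _ _
  have hkinc : ∀ i, (km i).1 < (km (i+1)).1 := fun i => hk1 _ _
  have hminc : ∀ i, (km i).2 < (km (i+1)).2 := fun i => hm1 _ _
  have hkge : ∀ i, i ≤ (km i).1 := by
    intro i
    induction i with
    | zero => exact Nat.zero_le _
    | succ n ih => exact Nat.succ_le_of_lt (lt_of_le_of_lt ih (hkinc n))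
  have hmge : ∀ i, i ≤ (km i).2 := by
    intro i
    induction i with
    | zero => exact Nat.zero_le _
    | succ n ih => exact Nat.succ_le_of_lt (lt_of_le_of_lt ih (hminc n))
  have hgsel : ∀ j, ∃ G ∈ A' j, G.1 ⊆ (f (km j).2).1 :=
    fun j => pU2 (km j).1 _ (hDU _ (hkmD j)) j (hkge j)
  choose g hg1 hg2 using hgsel
  refine ⟨g, hg1, ?_⟩
  intro K hc hn hKY
  have hev := tendsto_fell.mp hft K hc hn hKY
  rw [Filter.eventually_atTop] at hev
  obtain ⟨M, hM⟩ := hev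
  apply Set.Finite.subset (Set.finite_Iio M)
  intro j hj
  simp only [Set.mem_setOf_eq] at hj
  by_contra hjM
  have hMj : M ≤ j := by simpa using hjM
  have hsub : (f (km j).2).1 ⊆ Kᶜ := hM _ (le_trans hMj (hmge j))
  exact hj ((hg2 j).trans hsub)

end FellAux

/-- Theorem: if all open subspaces of `X` are k-Lindelöf and `E ∈ 2^X`, then in
`(2^X, F⁺)` the properties `α₄(Ω_E, Σ_E)` and `S₁(Ω_E, Σ_E)` are equivalent. -/
theorem stmt8 (X : Type u) [TopologicalSpace X] [T2Space X] [Infinite X]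
    (hkL : ∀ U : Set X, IsOpen U → KLindelof U)
    (E : HClosed X) :
    Alpha4 (OmegaPt E) (SigmaPt E) ↔ S1 (OmegaPt E) (SigmaPt E) := by
  classical
  constructor
  · -- α₄ ⇒ S₁
    intro hα A hA
    have hne : ∀ n, (A n).Nonempty := fun n => (mem_closure_fell.mp (hA n).2).1
    by_cases hGB : {n : ℕ | ¬ ∃ F ∈ A n, F.1 ⊆ E.1}.Finite
    · -- cofinitely many indices have a trivially converging member
      set b : ℕ → HClosed X := fun n =>
        if h : ∃ F ∈ A n, F.1 ⊆ E.1 then h.choose else (hne n).choose with hb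
      have hbA : ∀ n, b n ∈ A n := by
        intro n
        by_cases h : ∃ F ∈ A n, F.1 ⊆ E.1
        · have : b n = h.choose := dif_pos h
          rw [this]; exact h.choose_spec.1
        · have : b n = (hne n).choose := dif_neg h
          rw [this]; exact (hne n).choose_spec
      refine ⟨b, hbA, b, fun n => ?_, ?_, rfl⟩
      · have := (hA n).1 (hbA n)
        simpa using this
      · rw [tendsto_fell]
        intro K hc hn hKY
        rw [← Nat.cofinite_eq_atTop, Filter.eventually_cofinite]
        apply Set.Finite.subset hGB
        intro n hn2
        simp only [Set.mem_setOf_eq] at hn2 ⊢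
        intro hgood
        apply hn2
        have hbn : b n = hgood.choose := dif_pos hgood
        rw [hbn]
        exact hgood.choose_spec.2.trans (fun x hx hxK => hKY hxK hx)
    · -- infinitely many "bad" indices
      set p : ℕ → Prop := fun n => ¬ ∃ F ∈ A n, F.1 ⊆ E.1 with hp
      have hpinf : {n : ℕ | p n}.Infinite := hGB
      obtain ⟨n₁, hn₁⟩ := hpinf.nonempty
      have hYne : ((E.1)ᶜ).Nonempty := by
        obtain ⟨F, hF⟩ := hne n₁
        have hns : ¬ F.1 ⊆ E.1 := fun hsub => hn₁ ⟨F, hF, hsub⟩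
        obtain ⟨x, _, hxE⟩ := Set.not_subset.mp hns
        exact ⟨x, hxE⟩
      have hmeet : ∀ n, p n → ∀ F ∈ A n, (F.1 ∩ (E.1)ᶜ).Nonempty := by
        intro n hn F hF
        have hns : ¬ F.1 ⊆ E.1 := fun hsub => hn ⟨F, hF, hsub⟩
        obtain ⟨x, hxF, hxE⟩ := Set.not_subset.mp hns
        exact ⟨x, hxF, hxE⟩
      have hav : ∀ n, ∀ K : Set X, IsCompact K → K.Nonempty → K ⊆ (E.1)ᶜ →
          ∃ F ∈ A n, F.1 ⊆ Kᶜ := fun n => (mem_closure_fell.mp (hA n).2).2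
      have href : ∀ j : ℕ, ∃ A'j ⊆ A (Nat.nth p j), A'j.Countable ∧
          ∀ K : Set X, IsCompact K → K.Nonempty → K ⊆ (E.1)ᶜ → ∃ F ∈ A'j, F.1 ⊆ Kᶜ := by
        intro j
        have hpj : p (Nat.nth p j) := Nat.nth_mem_of_infinite hpinf j
        exact exists_countable_refine hkL E (A (Nat.nth p j)) (hmeet _ hpj) (hav _) hYne
      choose A' hA'sub hA'cnt hA'av using href
      have hA'meet : ∀ j, ∀ F ∈ A' j, (F.1 ∩ (E.1)ᶜ).Nonempty := fun j F hF =>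
        hmeet _ (Nat.nth_mem_of_infinite hpinf j) F (hA'sub j hF)
      obtain ⟨g, hgmem, hgK⟩ := core_selection E hα A' hA'cnt hA'meet hA'av hYne
      set b : ℕ → HClosed X := fun n =>
        if hpn : p n then g (Nat.count p n)
        else if h : ∃ F ∈ A n, F.1 ⊆ E.1 then h.choose else (hne n).choose with hb
      have hbA : ∀ n, b n ∈ A n := by
        intro n
        by_cases hpn : p n
        · have hbn : b n = g (Nat.count p n) := dif_pos hpn
          rw [hbn]
          have h2 := hA'sub (Nat.count p n) (hgmem (Nat.count p n))
          rwa [Nat.nth_count hpn] at h2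
        · have hgood : ∃ F ∈ A n, F.1 ⊆ E.1 := not_not.mp hpn
          have hbn : b n = hgood.choose := by
            rw [hb]; simp only [dif_neg hpn, dif_pos hgood]
          rw [hbn]; exact hgood.choose_spec.1
      refine ⟨b, hbA, b, fun n => by simpa using (hA n).1 (hbA n), ?_, rfl⟩
      rw [tendsto_fell]
      intro K hc hn hKY
      have hfin := hgK K hc hn hKY
      rw [← Nat.cofinite_eq_atTop, Filter.eventually_cofinite]
      apply Set.Finite.subset (hfin.image (Nat.nth p))
      intro n hn2
      simp only [Set.mem_setOf_eq] at hn2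
      by_cases hpn : p n
      · have hbn : b n = g (Nat.count p n) := dif_pos hpn
        rw [hbn] at hn2
        exact ⟨Nat.count p n, hn2, Nat.nth_count hpn⟩
      · exfalso
        have hgood : ∃ F ∈ A n, F.1 ⊆ E.1 := not_not.mp hpn
        have hbn : b n = hgood.choose := by
          rw [hb]; simp only [dif_neg hpn, dif_pos hgood]
        rw [hbn] at hn2
        exact hn2 (hgood.choose_spec.2.trans (fun x hx hxK => hKY hxK hx))
  · -- S₁ ⇒ α₄
    intro hS A hA
    obtain ⟨b, hbA, hbS⟩ := hS A (fun n => (hA n).1)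
    refine ⟨Set.range b, hbS, ?_⟩
    have huniv : {n : ℕ | (A n ∩ Set.range b).Nonempty} = Set.univ := by
      ext n
      simp only [Set.mem_univ, iff_true, Set.mem_setOf_eq]
      exact ⟨b n, hbA n, Set.mem_range_self n⟩
    rw [huniv]
    exact Set.infinite_univ
end

section
/- Let X be an infinite Hausdorff space and let 𝒲 be an open cover of (𝕂(X), V⁺). Then 𝒲 is an ω-cover of (𝕂(X), V⁺) if and only if the family 𝒰(𝒲) = {U ⊆ X : U is open in X and U⁺ ⊆ W for some W ∈ 𝒲} is a k-cover of X. -/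
open Set Filter Pointwise

universe u

lemma vietoris_basis (X : Type u) [TopologicalSpace X] :
    TopologicalSpace.IsTopologicalBasis
      {S : Set (KSp X) | ∃ U : Set X, IsOpen U ∧ S = {K : KSp X | K.1 ⊆ U}} := by
  refine ⟨?_, ?_, rfl⟩
  · rintro t1 ⟨U, hU, rfl⟩ t2 ⟨V, hV, rfl⟩ K ⟨hK1, hK2⟩
    exact ⟨{L : KSp X | L.1 ⊆ U ∩ V}, ⟨U ∩ V, hU.inter hV, rfl⟩,
      Set.subset_inter hK1 hK2, fun L hL =>
        ⟨hL.trans Set.inter_subset_left, hL.trans Set.inter_subset_right⟩⟩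
  · apply Set.eq_univ_of_univ_subset
    intro K _
    exact ⟨{K : KSp X | K.1 ⊆ Set.univ}, ⟨Set.univ, isOpen_univ, rfl⟩, Set.subset_univ _⟩

/-- Lemma: an open cover `𝒲` of `(𝕂(X), V⁺)` is an ω-cover iff
`𝒰(𝒲) = {U open in X : U⁺ ⊆ W for some W ∈ 𝒲}` is a k-cover of `X`. -/
theorem stmt9 (X : Type u) [TopologicalSpace X] [T2Space X] [Infinite X]
    (W : Set (Set (KSp X)))
    (hW : (∀ V ∈ W, IsOpen V) ∧ ⋃₀ W = Set.univ) :
    IsOmegaCover W ↔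
      IsKCover {U : Set X | IsOpen U ∧ ∃ V ∈ W, {K : KSp X | K.1 ⊆ U} ⊆ V} := by
  obtain ⟨hWopen, hWcov⟩ := hW
  -- key: every point of an open set of KSp X lies in a basic U⁺ inside it
  have key : ∀ V ∈ W, ∀ K : KSp X, K ∈ V →
      ∃ U : Set X, IsOpen U ∧ K.1 ⊆ U ∧ {L : KSp X | L.1 ⊆ U} ⊆ V := by
    intro V hV K hK
    obtain ⟨S, ⟨U, hU, rfl⟩, hKS, hSV⟩ :=
      (vietoris_basis X).exists_subset_of_mem_open hK (hWopen V hV)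
    exact ⟨U, hU, hKS, hSV⟩
  have hXne : Nonempty X := inferInstance
  obtain ⟨x0⟩ := hXne
  -- every point of X lies in some member of the derived family
  have hcov : ∀ x : X, ∃ U, (IsOpen U ∧ ∃ V ∈ W, {K : KSp X | K.1 ⊆ U} ⊆ V) ∧ x ∈ U := by
    intro x
    have hx : ({x} : Set X) ∈ {A : Set X | IsCompact A ∧ A.Nonempty} :=
      ⟨isCompact_singleton, Set.singleton_nonempty x⟩
    have : (⟨{x}, hx⟩ : KSp X) ∈ ⋃₀ W := hWcov ▸ Set.mem_univ _
    obtain ⟨V, hV, hKV⟩ := this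
    obtain ⟨U, hU, hsub, hUV⟩ := key V hV _ hKV
    exact ⟨U, ⟨hU, V, hV, hUV⟩, hsub rfl⟩
  constructor
  · rintro ⟨-, -, huniv, -⟩
    refine ⟨fun U hU => hU.1, ?_, ?_, ?_⟩
    · apply Set.eq_univ_of_univ_subset
      intro x _
      obtain ⟨U, hU, hxU⟩ := hcov x
      exact ⟨U, hU, hxU⟩
    · rintro ⟨-, V, hV, hVsub⟩
      exact huniv (by rwa [Set.eq_univ_of_univ_subset
        (fun K _ => hVsub (Set.subset_univ _))] at hV)
    · intro C hC
      rcases C.eq_empty_or_nonempty with rfl | hCne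
      · obtain ⟨U, hU, _⟩ := hcov x0
        exact ⟨U, hU, Set.empty_subset _⟩
      · have hCK : C ∈ {A : Set X | IsCompact A ∧ A.Nonempty} := ⟨hC, hCne⟩
        have : (⟨C, hCK⟩ : KSp X) ∈ ⋃₀ W := hWcov ▸ Set.mem_univ _
        obtain ⟨V, hV, hKV⟩ := this
        obtain ⟨U, hU, hsub, hUV⟩ := key V hV _ hKV
        exact ⟨U, ⟨hU, V, hV, hUV⟩, hsub⟩
  · rintro ⟨-, -, huniv, hk⟩
    refine ⟨hWopen, hWcov, ?_, ?_⟩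
    · intro hVu
      exact huniv ⟨isOpen_univ, Set.univ, hVu, Set.subset_univ _⟩
    · intro F hF
      set C : Set X := ⋃ K ∈ F, (K : KSp X).1 with hCdef
      have hCcomp : IsCompact C := hF.isCompact_biUnion (fun K _ => K.2.1)
      obtain ⟨U, ⟨hUopen, V, hV, hUV⟩, hCU⟩ := hk C hCcomp
      refine ⟨V, hV, fun K hK => hUV ?_⟩
      exact (Set.subset_biUnion_of_mem hK).trans hCU
end

section
/- Let X be an infinite Hausdorff space and let 𝒲 be an open cover of (𝔽(X), V⁺). Then 𝒲 is an ω-cover of (𝔽(X), V⁺) if and only if the family 𝒰(𝒲) = {U ⊆ X : U is open in X and U⁺ ⊆ W for some W ∈ 𝒲} is an ω-cover of X. -/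
open Set Filter Pointwise

universe u

open TopologicalSpace in
lemma basisF (X : Type u) [TopologicalSpace X] :
    IsTopologicalBasis {S : Set (FSp X) | ∃ U : Set X, IsOpen U ∧ S = {F : FSp X | F.1 ⊆ U}} := by
  refine ⟨?_, ?_, rfl⟩
  · rintro S ⟨U, hU, rfl⟩ T ⟨V, hV, rfl⟩ F ⟨hFU, hFV⟩
    exact ⟨{F : FSp X | F.1 ⊆ U ∩ V}, ⟨U ∩ V, hU.inter hV, rfl⟩,
      Set.subset_inter hFU hFV, fun G hG => ⟨fun x hx => (hG hx).1, fun x hx => (hG hx).2⟩⟩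
  · apply Set.eq_univ_of_forall; intro F
    exact ⟨Set.univ, ⟨Set.univ, isOpen_univ, (Set.eq_univ_of_forall fun F => Set.subset_univ _).symm⟩, Set.mem_univ _⟩

/-- Lemma: an open cover `𝒲` of `(𝔽(X), V⁺)` is an ω-cover iff
`𝒰(𝒲) = {U open in X : U⁺ ⊆ W for some W ∈ 𝒲}` is an ω-cover of `X`. -/
theorem stmt10 (X : Type u) [TopologicalSpace X] [T2Space X] [Infinite X]
    (W : Set (Set (FSp X)))
    (hW : (∀ V ∈ W, IsOpen V) ∧ ⋃₀ W = Set.univ) :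
    IsOmegaCover W ↔
      IsOmegaCover {U : Set X | IsOpen U ∧ ∃ V ∈ W, {F : FSp X | F.1 ⊆ U} ⊆ V} := by
  obtain ⟨hWopen, hWcov⟩ := hW
  obtain ⟨x0⟩ : Nonempty X := inferInstance
  constructor
  · rintro ⟨-, -, hWuniv, hWfin⟩
    have main : ∀ G : Set X, G.Finite →
        ∃ U ∈ {U : Set X | IsOpen U ∧ ∃ V ∈ W, {F : FSp X | F.1 ⊆ U} ⊆ V}, G ⊆ U := by
      intro G hG
      set F : FSp X := ⟨insert x0 G, hG.insert x0, Set.insert_nonempty _ _⟩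
      obtain ⟨V, hV, hFV⟩ := hWfin {F} (Set.finite_singleton F)
      obtain ⟨S, ⟨U, hU, rfl⟩, hFS, hSV⟩ :=
        (basisF X).exists_subset_of_mem_open (hFV rfl) (hWopen V hV)
      exact ⟨U, ⟨hU, V, hV, hSV⟩, (Set.subset_insert x0 G).trans hFS⟩
    refine ⟨fun U hU => hU.1, ?_, ?_, main⟩
    · apply Set.eq_univ_of_forall; intro x
      obtain ⟨U, hU, hxU⟩ := main {x} (Set.finite_singleton x)
      exact ⟨U, hU, hxU rfl⟩
    · rintro ⟨-, V, hV, hsub⟩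
      exact hWuniv (by rwa [Set.eq_univ_of_forall fun F => hsub (Set.subset_univ _)] at hV)
  · rintro ⟨-, -, hUuniv, hUfin⟩
    refine ⟨hWopen, hWcov, ?_, ?_⟩
    · intro huniv
      exact hUuniv ⟨isOpen_univ, Set.univ, huniv, Set.subset_univ _⟩
    · intro 𝒢 h𝒢
      obtain ⟨U, ⟨hUo, V, hV, hsub⟩, hGU⟩ :=
        hUfin (⋃ F ∈ 𝒢, F.1) (h𝒢.biUnion fun F _ => F.2.1)
      exact ⟨V, hV, fun F hF => hsub fun x hx => hGU (Set.mem_biUnion hF hx)⟩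
end
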